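/- arXiv:1211.1245 — 6 statements merged into one kernel-verified Lean document; each statement's English description precedes it below -/
import Mathlib

section
/- Let B = (b_ij) be an m×m irreducible coupling matrix. Then: (i) the kernel of B is contained in the line ℝ𝟙 spanned by the vector 𝟙 = (1,…,1); (ii) Ker(B) = ℝ𝟙 if and only if B is degenerate. In particular, B is invertible if and only if ∑_{j=1}^m b_ij > 0 for some i ∈ {1,…,m}. -/
open Filter MeasureTheory

noncomputable section

/-- We model the flat torus `T^N = ℝ^N/ℤ^N` by working with `ℤ^N`-periodic
functions on `Euc N = ℝ^N` (with the Euclidean structure). -/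
abbrev Euc (N : ℕ) := EuclideanSpace ℝ (Fin N)

/-- The vector of `ℝ^N` with integer coordinates `k`. -/
def intVec {N : ℕ} (k : Fin N → ℤ) : Euc N := WithLp.toLp 2 (fun i => (k i : ℝ))

/-- A function on `ℝ^N` is `ℤ^N`-periodic, i.e. descends to the torus. -/
def ZPeriodic {N : ℕ} {α : Type*} (f : Euc N → α) : Prop :=
  ∀ (x : Euc N) (k : Fin N → ℤ), f (x + intVec k) = f x

/-- `b` is a coupling matrix: off-diagonal entries are nonpositive and
row sums are nonnegative. -/
def IsCouplingMat {m : ℕ} (b : Fin m → Fin m → ℝ) : Prop :=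
  (∀ i j, j ≠ i → b i j ≤ 0) ∧ (∀ i, 0 ≤ ∑ j, b i j)

/-- `b` is degenerate: all row sums vanish. -/
def IsDegenerateMat {m : ℕ} (b : Fin m → Fin m → ℝ) : Prop :=
  ∀ i, ∑ j, b i j = 0

/-- `b` is irreducible: for every nonempty proper subset `I` of the indices
there are `i ∈ I` and `j ∉ I` with `b i j ≠ 0`. -/
def IsIrreducibleMat {m : ℕ} (b : Fin m → Fin m → ℝ) : Prop :=
  ∀ I : Finset (Fin m), I.Nonempty → I ≠ Finset.univ → ∃ i ∈ I, ∃ j, j ∉ I ∧ b i j ≠ 0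

/-- `H` is a convex Hamiltonian on the torus: continuous, convex in the momentum,
`ℤ^N`-periodic in the space variable, and coercive (uniformly in `x`). -/
def IsConvexHamiltonian {N : ℕ} (H : Euc N → Euc N → ℝ) : Prop :=
  Continuous (fun q : Euc N × Euc N => H q.1 q.2) ∧
  (∀ x : Euc N, ConvexOn ℝ Set.univ (H x)) ∧
  (∀ (x : Euc N) (k : Fin N → ℤ) (p : Euc N), H (x + intVec k) p = H x p) ∧
  (∃ α β : ℝ → ℝ, Tendsto α atTop atTop ∧ Tendsto β atTop atTop ∧
    ∀ x p, α ‖p‖ ≤ H x p ∧ H x p ≤ β ‖p‖)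

/-- `B` is a continuous field of irreducible degenerate coupling matrices
on the torus. -/
def IsCouplingField {N m : ℕ} (B : Euc N → Fin m → Fin m → ℝ) : Prop :=
  (∀ i j, Continuous fun x => B x i j) ∧
  (∀ i j, ZPeriodic fun x => B x i j) ∧
  (∀ x, IsCouplingMat (B x) ∧ IsDegenerateMat (B x) ∧ IsIrreducibleMat (B x))

/-- `u` is a viscosity subsolution of the weakly coupled system
`H_i(x,Du_i) + (B(x)u(x))_i = a_i` on the torus. -/
def IsSubSol {N m : ℕ} (H : Fin m → Euc N → Euc N → ℝ) (B : Euc N → Fin m → Fin m → ℝ)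
    (a : Fin m → ℝ) (u : Fin m → Euc N → ℝ) : Prop :=
  ∀ (i : Fin m) (x : Euc N) (φ : Euc N → ℝ), ContDiff ℝ 1 φ →
    IsLocalMax (fun y => u i y - φ y) x →
    H i x (gradient φ x) + ∑ j, B x i j * u j x ≤ a i

/-- `u` is a viscosity supersolution of the weakly coupled system
`H_i(x,Du_i) + (B(x)u(x))_i = a_i` on the torus. -/
def IsSuperSol {N m : ℕ} (H : Fin m → Euc N → Euc N → ℝ) (B : Euc N → Fin m → Fin m → ℝ)
    (a : Fin m → ℝ) (u : Fin m → Euc N → ℝ) : Prop :=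
  ∀ (i : Fin m) (x : Euc N) (φ : Euc N → ℝ), ContDiff ℝ 1 φ →
    IsLocalMin (fun y => u i y - φ y) x →
    a i ≤ H i x (gradient φ x) + ∑ j, B x i j * u j x

/-- The `i`-th equation subsolution property, restricted to a subset `U` of `ℝ^N`. -/
def SubSolIdxOn {N m : ℕ} (H : Fin m → Euc N → Euc N → ℝ) (B : Euc N → Fin m → Fin m → ℝ)
    (i : Fin m) (U : Set (Euc N)) (u : Fin m → Euc N → ℝ) : Prop :=
  ∀ x ∈ U, ∀ φ : Euc N → ℝ, ContDiff ℝ 1 φ →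
    IsLocalMax (fun y => u i y - φ y) x →
    H i x (gradient φ x) + ∑ j, B x i j * u j x ≤ 0

/-- The `i`-th equation supersolution property, restricted to a subset `U` of `ℝ^N`. -/
def SuperSolIdxOn {N m : ℕ} (H : Fin m → Euc N → Euc N → ℝ) (B : Euc N → Fin m → Fin m → ℝ)
    (i : Fin m) (U : Set (Euc N)) (u : Fin m → Euc N → ℝ) : Prop :=
  ∀ x ∈ U, ∀ φ : Euc N → ℝ, ContDiff ℝ 1 φ →
    IsLocalMin (fun y => u i y - φ y) x →
    0 ≤ H i x (gradient φ x) + ∑ j, B x i j * u j x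

/-- A continuous `ℝ^m`-valued function on the torus (componentwise continuous
and `ℤ^N`-periodic). -/
def IsTorusFun {N m : ℕ} (u : Fin m → Euc N → ℝ) : Prop :=
  (∀ i, Continuous (u i)) ∧ (∀ i, ZPeriodic (u i))

/-- The system with constant right-hand side `a` admits a continuous viscosity
subsolution. -/
def HasSubSol {N m : ℕ} (H : Fin m → Euc N → Euc N → ℝ) (B : Euc N → Fin m → Fin m → ℝ)
    (a : ℝ) : Prop :=
  ∃ u : Fin m → Euc N → ℝ, IsTorusFun u ∧ IsSubSol H B (fun _ => a) u

/-- The set `H(0)` of critical subsolutions (the critical value being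
assumed to be `0`). -/
def Crit {N m : ℕ} (H : Fin m → Euc N → Euc N → ℝ) (B : Euc N → Fin m → Fin m → ℝ) :
    Set (Fin m → Euc N → ℝ) :=
  {u | IsTorusFun u ∧ IsSubSol H B (fun _ => 0) u}

/-- The Mañé matrix `Φ_{i,j}(y,x) = sup_{v ∈ H(0)} (v_i(x) - v_j(y))`. -/
def Mane {N m : ℕ} (H : Fin m → Euc N → Euc N → ℝ) (B : Euc N → Fin m → Fin m → ℝ)
    (i j : Fin m) (y x : Euc N) : ℝ :=
  sSup ((fun v : Fin m → Euc N → ℝ => v i x - v j y) '' Crit H B)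

/-- The Aubry set: the set of points `y` such that the Mañé vector
`Φ_{·,i₀}(y,·)` is a critical (viscosity) solution on the whole torus; this is
independent of the index `i₀`. -/
def MAubry {N m : ℕ} (H : Fin m → Euc N → Euc N → ℝ) (B : Euc N → Fin m → Fin m → ℝ) :
    Set (Euc N) :=
  {y | ∀ i₀ : Fin m,
    IsSubSol H B (fun _ => 0) (fun l x => Mane H B l i₀ y x) ∧
    IsSuperSol H B (fun _ => 0) (fun l x => Mane H B l i₀ y x)}

/-- The `i`-th component of a critical subsolution `v` is strict at `y`:
on some open neighbourhood `V` of `y` one has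
`H_i(x,Dv_i(x)) + (B(x)v(x))_i ≤ -δ` for a.e. `x ∈ V`. -/
def StrictAt {N m : ℕ} (H : Fin m → Euc N → Euc N → ℝ) (B : Euc N → Fin m → Fin m → ℝ)
    (v : Fin m → Euc N → ℝ) (i : Fin m) (y : Euc N) : Prop :=
  ∃ V : Set (Euc N), IsOpen V ∧ y ∈ V ∧ ∃ δ : ℝ, 0 < δ ∧
    ∀ᵐ x ∂(volume : Measure (Euc N)), x ∈ V →
      DifferentiableAt ℝ (v i) x ∧
      H i x (gradient (v i) x) + ∑ j, B x i j * v j x ≤ -δ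

/-- `p` is a reachable gradient of `w` at `y`: a limit of gradients of `w`
along a sequence of differentiability points converging to `y`. -/
def ReachableGrad {N : ℕ} (w : Euc N → ℝ) (y : Euc N) (p : Euc N) : Prop :=
  ∃ z : ℕ → Euc N, (∀ n, DifferentiableAt ℝ w (z n)) ∧
    Tendsto z atTop (nhds y) ∧
    Tendsto (fun n => gradient w (z n)) atTop (nhds p)


/-!
Discrete maximum principle: if `B v = 0` and `v` attains a nonnegative maximum at `i`, then row `i`
of `B` (nonpositive off the diagonal, nonnegative row sum) forces `v j = v i` whenever `B i j ≠ 0`.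
The set of maximal indices is therefore closed under the coupling, hence everything by
irreducibility, so `v` is constant; replacing `v` by `-v` covers a negative maximum.
Parts (ii) and (iii) follow because `B 𝟙` is the vector of row sums.
-/

open Matrix

lemma Matrix.mulVec_const_apply {ι κ R : Type*} [Fintype κ] [NonUnitalNonAssocSemiring R]
    (B : Matrix ι κ R) (c : R) (i : ι) : (B *ᵥ fun _ => c) i = (∑ j, B i j) * c := by
  simp [mulVec, dotProduct, Finset.sum_mul]

section CouplingMatrix

variable {m : ℕ}

lemma IsIrreducibleMat.eq_univ {b : Fin m → Fin m → ℝ} (hb : IsIrreducibleMat b)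
    {I : Finset (Fin m)} (hne : I.Nonempty) (hclosed : ∀ i ∈ I, ∀ j, b i j ≠ 0 → j ∈ I) :
    I = Finset.univ := by
  by_contra hI
  obtain ⟨i, hi, j, hj, hbij⟩ := hb I hne hI
  exact hj (hclosed i hi j hbij)

lemma IsCouplingMat.not_isDegenerateMat_iff {b : Fin m → Fin m → ℝ} (hb : IsCouplingMat b) :
    ¬ IsDegenerateMat b ↔ ∃ i, 0 < ∑ j, b i j := by
  simp only [IsDegenerateMat, not_forall]
  exact exists_congr fun i => (hb.2 i).lt_iff_ne'.symm

lemma isDegenerateMat_iff_mulVec_const_eq_zero (B : Matrix (Fin m) (Fin m) ℝ) :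
    IsDegenerateMat B ↔ ∀ c : ℝ, B *ᵥ (fun _ => c) = 0 := by
  constructor
  · intro hd c
    funext i
    rw [mulVec_const_apply, hd i, zero_mul, Pi.zero_apply]
  · intro h i
    simpa [mulVec_const_apply] using congrFun (h 1) i

variable {B : Matrix (Fin m) (Fin m) ℝ}

lemma IsCouplingMat.mulVec_pos_of_isMax (hB : IsCouplingMat B) {v : Fin m → ℝ} {i j : Fin m}
    (hmax : ∀ k, v k ≤ v i) (hvi : 0 ≤ v i) (hBij : B i j ≠ 0) (hvj : v j < v i) :
    0 < (B *ᵥ v) i := by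
  have hji : j ≠ i := by rintro rfl; exact lt_irrefl _ hvj
  have hle : ∀ k, B i k * v i ≤ B i k * v k := fun k => by
    rcases eq_or_ne k i with rfl | hki
    · rfl
    · exact mul_le_mul_of_nonpos_left (hmax k) (hB.1 i k hki)
  have hlt : B i j * v i < B i j * v j :=
    mul_lt_mul_of_neg_left hvj (lt_of_le_of_ne (hB.1 i j hji) hBij)
  calc 0 ≤ (∑ k, B i k) * v i := mul_nonneg (hB.2 i) hvi
    _ = ∑ k, B i k * v i := Finset.sum_mul ..
    _ < ∑ k, B i k * v k := Finset.sum_lt_sum (fun k _ => hle k) ⟨j, Finset.mem_univ _, hlt⟩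
    _ = (B *ᵥ v) i := rfl

lemma IsCouplingMat.eq_of_mulVec_eq_zero_of_isMax (hC : IsCouplingMat B)
    (hI : IsIrreducibleMat B) {v : Fin m → ℝ} (hv : B *ᵥ v = 0) {i₀ : Fin m}
    (hmax : ∀ k, v k ≤ v i₀) (h0 : 0 ≤ v i₀) (k : Fin m) : v k = v i₀ := by
  have hall : Finset.univ.filter (fun k => v k = v i₀) = Finset.univ := by
    refine hI.eq_univ ⟨i₀, by simp⟩ fun i hi j hBij => ?_
    simp only [Finset.mem_filter, Finset.mem_univ, true_and] at hi ⊢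
    by_contra hj
    have hpos := hC.mulVec_pos_of_isMax (fun k => (hmax k).trans hi.ge) (h0.trans hi.ge) hBij
      ((lt_of_le_of_ne (hmax j) hj).trans_eq hi.symm)
    exact hpos.ne' (congrFun hv i)
  simpa using Finset.ext_iff.mp hall k

theorem IsCouplingMat.exists_eq_const_of_mulVec_eq_zero (hC : IsCouplingMat B)
    (hI : IsIrreducibleMat B) {v : Fin m → ℝ} (hv : B *ᵥ v = 0) : ∃ c : ℝ, v = fun _ => c := by
  rcases isEmpty_or_nonempty (Fin m) with _ | _
  · exact ⟨0, funext isEmptyElim⟩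
  obtain ⟨i₀, hi₀⟩ := Finite.exists_max v
  obtain ⟨i₁, hi₁⟩ := Finite.exists_min v
  rcases le_or_gt 0 (v i₀) with h0 | h0
  · exact ⟨v i₀, funext (hC.eq_of_mulVec_eq_zero_of_isMax hI hv hi₀ h0)⟩
  · have hneg : B *ᵥ (-v) = 0 := by rw [mulVec_neg, hv, neg_zero]
    have hconst := hC.eq_of_mulVec_eq_zero_of_isMax hI hneg (i₀ := i₁)
      (fun k => neg_le_neg (hi₁ k)) (neg_nonneg.mpr ((hi₁ i₀).trans h0.le))
    exact ⟨v i₁, funext fun k => neg_inj.mp (hconst k)⟩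

lemma IsCouplingMat.setOf_mulVec_eq_zero_eq_range_const_iff (hC : IsCouplingMat B)
    (hI : IsIrreducibleMat B) :
    {v : Fin m → ℝ | B *ᵥ v = 0} = Set.range (fun c : ℝ => fun _ : Fin m => c) ↔
      IsDegenerateMat B := by
  rw [isDegenerateMat_iff_mulVec_const_eq_zero]
  refine ⟨fun h c => h.ge ⟨c, rfl⟩, fun h => ?_⟩
  refine Set.Subset.antisymm (fun v hv => ?_) (Set.range_subset_iff.mpr h)
  obtain ⟨c, hc⟩ := hC.exists_eq_const_of_mulVec_eq_zero hI hv
  exact ⟨c, hc.symm⟩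

lemma IsCouplingMat.exists_mulVec_eq_zero_iff (hm : 0 < m) (hC : IsCouplingMat B)
    (hI : IsIrreducibleMat B) : (∃ v ≠ 0, B *ᵥ v = 0) ↔ IsDegenerateMat B := by
  constructor
  · rintro ⟨v, hv0, hv⟩ i
    obtain ⟨c, rfl⟩ := hC.exists_eq_const_of_mulVec_eq_zero hI hv
    have hc : c ≠ 0 := by rintro rfl; exact hv0 rfl
    have hrow := congrFun hv i
    rw [mulVec_const_apply] at hrow
    exact (mul_eq_zero.mp hrow).resolve_right hc
  · intro hd
    exact ⟨fun _ => 1, fun h => one_ne_zero (congrFun h ⟨0, hm⟩),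
      (isDegenerateMat_iff_mulVec_const_eq_zero B).mp hd 1⟩

end CouplingMatrix

/-- kernel of an irreducible coupling matrix. -/
theorem stmt0 {m : ℕ} (hm : 0 < m) (B : Matrix (Fin m) (Fin m) ℝ)
    (hC : IsCouplingMat (fun i j => B i j)) (hI : IsIrreducibleMat (fun i j => B i j)) :
    (∀ v : Fin m → ℝ, B.mulVec v = 0 → ∃ c : ℝ, v = fun _ => c) ∧
    (({v : Fin m → ℝ | B.mulVec v = 0} = Set.range (fun c : ℝ => (fun _ : Fin m => c))) ↔
      IsDegenerateMat (fun i j => B i j)) ∧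
    (IsUnit B ↔ ∃ i, 0 < ∑ j, B i j) := by
  refine ⟨fun v hv => hC.exists_eq_const_of_mulVec_eq_zero hI hv,
    hC.setOf_mulVec_eq_zero_eq_range_const_iff hI, ?_⟩
  rw [isUnit_iff_isUnit_det, isUnit_iff_ne_zero, Ne, ← Matrix.exists_mulVec_eq_zero_iff,
    hC.exists_mulVec_eq_zero_iff hm hI, hC.not_isDegenerateMat_iff]

end
end

section
/- Let B be an m×m coupling matrix that is degenerate. If a = (a_1,…,a_m) ∈ ℝ^m satisfies a_i > 0 for every i ∈ {1,…,m}, then a does not belong to the image of B. -/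
open Filter MeasureTheory

noncomputable section

/- At an index `i` where `v` is minimal, `(B v)_i = ∑_j B_ij (v_j - v_i)` because the row sums
vanish, and every term is `≤ 0` since `B_ij ≤ 0 ≤ v_j - v_i` off the diagonal. So `B v` always
has a nonpositive entry. -/

namespace Matrix

variable {n R : Type*} [Fintype n]

theorem mulVec_apply_eq_sum_mul_sub_of_sum_row_eq_zero [Ring R] {B : Matrix n n R}
    (hB : ∀ i, ∑ j, B i j = 0) (v : n → R) (i : n) :
    B.mulVec v i = ∑ j, B i j * (v j - v i) := by
  simp only [mulVec, dotProduct, mul_sub, Finset.sum_sub_distrib, ← Finset.sum_mul, hB i,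
    zero_mul, sub_zero]

theorem mulVec_apply_nonpos_of_forall_le [Ring R] [PartialOrder R] [IsOrderedRing R]
    {B : Matrix n n R} (hoff : ∀ i j, j ≠ i → B i j ≤ 0) (hB : ∀ i, ∑ j, B i j = 0)
    {v : n → R} {i : n} (hi : ∀ j, v i ≤ v j) :
    B.mulVec v i ≤ 0 := by
  rw [mulVec_apply_eq_sum_mul_sub_of_sum_row_eq_zero hB]
  refine Finset.sum_nonpos fun j _ => ?_
  obtain rfl | hji := eq_or_ne j i
  · simp
  · exact mul_nonpos_of_nonpos_of_nonneg (hoff i j hji) (sub_nonneg.mpr (hi j))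

theorem exists_mulVec_apply_nonpos [Nonempty n] [Ring R] [LinearOrder R] [IsOrderedRing R]
    {B : Matrix n n R} (hoff : ∀ i j, j ≠ i → B i j ≤ 0) (hB : ∀ i, ∑ j, B i j = 0)
    (v : n → R) :
    ∃ i, B.mulVec v i ≤ 0 := by
  obtain ⟨i, -, hi⟩ := Finset.exists_min_image Finset.univ v Finset.univ_nonempty
  exact ⟨i, mulVec_apply_nonpos_of_forall_le hoff hB fun j => hi j (Finset.mem_univ j)⟩

end Matrix

/-- a strictly positive vector is not in the image of a degenerate
coupling matrix. -/
theorem stmt1 {m : ℕ} (hm : 0 < m) (B : Matrix (Fin m) (Fin m) ℝ)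
    (hC : IsCouplingMat (fun i j => B i j)) (hD : IsDegenerateMat (fun i j => B i j))
    (a : Fin m → ℝ) (ha : ∀ i, 0 < a i) :
    ¬ ∃ v : Fin m → ℝ, B.mulVec v = a := by
  rintro ⟨v, rfl⟩
  have : Nonempty (Fin m) := ⟨⟨0, hm⟩⟩
  obtain ⟨i, hi⟩ := Matrix.exists_mulVec_apply_nonpos hC.1 hD v
  exact (ha i).not_ge hi

end
end

section
/- For every a = (a_1,…,a_m) ∈ ℝ^m there exists a constant M ≥ 0, depending only on a and on B(·), such that every continuous function u = (u_1,…,u_m) : T^N → ℝ^m satisfying (B(x)u(x))_i ≤ a_i for every x ∈ T^N and every i ∈ {1,…,m} obeys: (i) sup_{x∈T^N} |u_i(x) − u_j(x)| ≤ M for all i,j ∈ {1,…,m}; (ii) |(B(x)u(x))_i| ≤ M for every x ∈ T^N and every i ∈ {1,…,m}. -/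
open Filter MeasureTheory

noncomputable section

/-!
Fix `x`. Starting from an index `i₀` where `u(x)` is maximal, irreducibility lets us grow a set
`I ∋ i₀` one index at a time: some `i ∈ I` is coupled to some `j ∉ I` with `-b_ij ≥ ε`, and the
`i`-th row of `B(x)u(x) ≤ a`, rewritten as `∑_l b_il (u_l - u_i) ≤ a_i` by degeneracy, bounds
`u_i - u_j` in terms of the gaps already controlled on `I`. After `m` steps `I` is everything,
which gives (i); (ii) follows from (i) since `(B u)_i = ∑_j b_ij (u_j - u_i)`. The constants `ε`
and a bound on `|b_ij|` are uniform in `x` because `B` is continuous and periodic, hence ranges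
over a compact set.
-/

open Finset

section CouplingMatrix

variable {ι : Type*} [Fintype ι]

lemma sum_mul_eq_sum_mul_sub_of_sum_eq_zero {c : ι → ℝ} (hc : ∑ j, c j = 0) (v : ι → ℝ) (t : ℝ) :
    ∑ j, c j * v j = ∑ j, c j * (v j - t) := by
  simp only [mul_sub, sum_sub_distrib, ← sum_mul, hc, zero_mul, sub_zero]

/-- The bound on `max v - v l` obtained after `k` steps of the growth argument. -/
def gapBound (n : ℕ) (A C ε : ℝ) : ℕ → ℝ
  | 0 => 0
  | k + 1 => gapBound n A C ε k + (A + n * C * gapBound n A C ε k) / ε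

variable {n : ℕ} {A C ε : ℝ}

lemma gapBound_nonneg (hA : 0 ≤ A) (hC : 0 ≤ C) (hε : 0 < ε) (k : ℕ) :
    0 ≤ gapBound n A C ε k := by
  induction k with
  | zero => rfl
  | succ k ih => rw [gapBound]; positivity

lemma gapBound_monotone (hA : 0 ≤ A) (hC : 0 ≤ C) (hε : 0 < ε) :
    Monotone (gapBound n A C ε) :=
  monotone_nat_of_le_succ fun k => by
    have := gapBound_nonneg (n := n) hA hC hε k
    rw [gapBound]
    exact le_add_of_nonneg_right (by positivity)

lemma sub_le_of_sum_mul_le {c : ι → ι → ℝ} {v : ι → ℝ} {i j : ι} {D : ℝ}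
    (hoff : ∀ l, l ≠ i → c i l ≤ 0) (hdeg : ∑ l, c i l = 0) (hC : ∀ l, |c i l| ≤ C)
    (hε : 0 < ε) (hij : ε ≤ -c i j) (hrow : ∑ l, c i l * v l ≤ A) (hD : ∀ l, v l - v i ≤ D) :
    v i - v j ≤ (A + Fintype.card ι * C * D) / ε := by
  have hD₀ : 0 ≤ D := by simpa using hD i
  have hC₀ : 0 ≤ C := (abs_nonneg _).trans (hC i)
  set t : ι → ℝ := fun l => c i l * (v l - v i)
  have hsum : ∑ l, t l ≤ A := sum_mul_eq_sum_mul_sub_of_sum_eq_zero hdeg v (v i) ▸ hrow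
  have ht : ∀ l, 0 ≤ t l + C * D := by
    intro l
    rcases eq_or_ne l i with rfl | hli
    · simp [t, mul_nonneg hC₀ hD₀]
    · have := abs_le.1 (hC l)
      have := hoff l hli
      have := hD l
      nlinarith
  have htj : t j + C * D ≤ A + Fintype.card ι * C * D := by
    calc t j + C * D ≤ ∑ l, (t l + C * D) := single_le_sum (fun l _ => ht l) (mem_univ j)
      _ = ∑ l, t l + Fintype.card ι * C * D := by
          rw [sum_add_distrib, sum_const, card_univ, nsmul_eq_mul, mul_assoc]
      _ ≤ A + Fintype.card ι * C * D := by gcongr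
  rw [le_div_iff₀ hε]
  rcases le_or_gt (v i - v j) 0 with h | h
  · nlinarith [ht j]
  · have : t j = -c i j * (v i - v j) := by ring
    nlinarith [mul_nonneg hC₀ hD₀]

variable {c : ι → ι → ℝ} {v : ι → ℝ}

lemma exists_finset_forall_sub_le_gapBound (hA : 0 ≤ A) (hC : ∀ i j, |c i j| ≤ C) (hε : 0 < ε)
    (hoff : ∀ i j, j ≠ i → c i j ≤ 0) (hdeg : ∀ i, ∑ j, c i j = 0)
    (hirr : ∀ I : Finset ι, I.Nonempty → I ≠ univ → ∃ i ∈ I, ∃ j, j ∉ I ∧ ε ≤ -c i j)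
    (hrow : ∀ i, ∑ j, c i j * v j ≤ A) {i₀ : ι} (hi₀ : ∀ l, v l ≤ v i₀) (k : ℕ) :
    ∃ I : Finset ι, i₀ ∈ I ∧ min k (Fintype.card ι) ≤ #I ∧
      ∀ l ∈ I, v i₀ - v l ≤ gapBound (Fintype.card ι) A C ε k := by
  classical
  have hC₀ : 0 ≤ C := (abs_nonneg _).trans (hC i₀ i₀)
  induction k with
  | zero => exact ⟨{i₀}, mem_singleton_self _, by simp, by simp [gapBound]⟩
  | succ k ih =>
    obtain ⟨I, hi₀I, hcard, hI⟩ := ih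
    have hmono := gapBound_monotone (n := Fintype.card ι) hA hC₀ hε k.le_succ
    by_cases hIu : I = univ
    · subst hIu
      exact ⟨univ, hi₀I, by simp, fun l hl => (hI l hl).trans hmono⟩
    obtain ⟨i, hiI, j, hjI, hij⟩ := hirr I ⟨i₀, hi₀I⟩ hIu
    have hstep : v i - v j ≤ (A + Fintype.card ι * C * gapBound (Fintype.card ι) A C ε k) / ε :=
      sub_le_of_sum_mul_le (hoff i) (hdeg i) (hC i) hε hij (hrow i)
        fun l => by linarith [hi₀ l, hI i hiI]
    refine ⟨insert j I, mem_insert_of_mem hi₀I, ?_, ?_⟩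
    · rw [card_insert_of_notMem hjI]
      omega
    · simp only [mem_insert, forall_eq_or_imp]
      refine ⟨?_, fun l hl => (hI l hl).trans hmono⟩
      rw [gapBound]
      linarith [hI i hiI]

theorem sub_le_gapBound_of_irreducible (hA : 0 ≤ A) (hC : ∀ i j, |c i j| ≤ C) (hε : 0 < ε)
    (hoff : ∀ i j, j ≠ i → c i j ≤ 0) (hdeg : ∀ i, ∑ j, c i j = 0)
    (hirr : ∀ I : Finset ι, I.Nonempty → I ≠ univ → ∃ i ∈ I, ∃ j, j ∉ I ∧ ε ≤ -c i j)
    (hrow : ∀ i, ∑ j, c i j * v j ≤ A) (i j : ι) :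
    v i - v j ≤ gapBound (Fintype.card ι) A C ε (Fintype.card ι) := by
  have : Nonempty ι := ⟨i⟩
  obtain ⟨i₀, hi₀⟩ := Finite.exists_max v
  obtain ⟨I, -, hcard, hI⟩ :=
    exists_finset_forall_sub_le_gapBound hA hC hε hoff hdeg hirr hrow hi₀ (Fintype.card ι)
  have hIu : I = univ :=
    (card_eq_iff_eq_univ I).1 (le_antisymm (card_le_univ I) (by simpa using hcard))
  linarith [hi₀ i, hI j (hIu ▸ mem_univ j)]

lemma abs_sum_mul_le {c : ι → ℝ} (hdeg : ∑ j, c j = 0) {i : ι} {D : ℝ} (hC : ∀ j, |c j| ≤ C)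
    (hD : ∀ j, |v j - v i| ≤ D) : |∑ j, c j * v j| ≤ Fintype.card ι * C * D := by
  rw [sum_mul_eq_sum_mul_sub_of_sum_eq_zero hdeg v (v i)]
  calc |∑ j, c j * (v j - v i)| ≤ ∑ j, |c j| * |v j - v i| := by
        simpa only [abs_mul] using abs_sum_le_sum_abs (fun j => c j * (v j - v i)) univ
    _ ≤ ∑ _j : ι, C * D :=
        sum_le_sum fun j _ => mul_le_mul (hC j) (hD j) (abs_nonneg _) ((abs_nonneg _).trans (hC j))
    _ = Fintype.card ι * C * D := by rw [sum_const, card_univ, nsmul_eq_mul, mul_assoc]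

end CouplingMatrix

section Torus

variable {N : ℕ} {α β : Type*}

lemma ZPeriodic.comp {f : Euc N → α} (hf : ZPeriodic f) (g : α → β) : ZPeriodic (g ∘ f) :=
  fun x k => congrArg g (hf x k)

lemma norm_sub_intVec_floor_le (x : Euc N) : ‖x - intVec (fun i => ⌊x i⌋)‖ ≤ N := by
  have hcoord : ∀ i, ‖(x - intVec (fun i => ⌊x i⌋)) i‖ ^ 2 ≤ 1 := fun i => by
    have h : (x - intVec (fun i => ⌊x i⌋)) i = Int.fract (x i) := rfl
    rw [h, Real.norm_of_nonneg (Int.fract_nonneg _)]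
    nlinarith [Int.fract_nonneg (x i), Int.fract_lt_one (x i)]
  rw [EuclideanSpace.norm_eq, Real.sqrt_le_iff]
  refine ⟨N.cast_nonneg, ?_⟩
  calc ∑ i, ‖(x - intVec (fun i => ⌊x i⌋)) i‖ ^ 2 ≤ ∑ _i : Fin N, (1 : ℝ) :=
        sum_le_sum fun i _ => hcoord i
    _ = N := by simp
    _ ≤ (N : ℝ) ^ 2 := by exact_mod_cast Nat.le_self_pow two_ne_zero N

lemma ZPeriodic.isCompact_range [TopologicalSpace α] {f : Euc N → α} (hc : Continuous f)
    (hp : ZPeriodic f) : IsCompact (Set.range f) := by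
  have : Set.range f = f '' Metric.closedBall 0 N := by
    refine (Set.image_subset_range _ _).antisymm' ?_
    rintro _ ⟨x, rfl⟩
    refine ⟨_, mem_closedBall_zero_iff.2 (norm_sub_intVec_floor_le x), ?_⟩
    rw [← hp _ (fun i => ⌊x i⌋), sub_add_cancel]
  exact this ▸ (isCompact_closedBall 0 N).image hc

lemma ZPeriodic.exists_pos_forall_le {f : Euc N → ℝ} (hc : Continuous f) (hp : ZPeriodic f)
    (hpos : ∀ x, 0 < f x) : ∃ δ > 0, ∀ x, δ ≤ f x := by
  obtain ⟨_, ⟨x₀, rfl⟩, hx₀⟩ := (hp.isCompact_range hc).exists_isLeast (Set.range_nonempty f)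
  exact ⟨f x₀, hpos x₀, fun x => hx₀ ⟨x, rfl⟩⟩

end Torus

namespace IsCouplingField

variable {N m : ℕ} {B : Euc N → Fin m → Fin m → ℝ}

lemma zPeriodic (hB : IsCouplingField B) : ZPeriodic B :=
  fun x k => funext₂ fun i j => hB.2.1 i j x k

lemma exists_nonneg_forall_abs_le (hB : IsCouplingField B) :
    ∃ C, 0 ≤ C ∧ ∀ x i j, |B x i j| ≤ C := by
  have hbdd : ∀ p : Fin m × Fin m, BddAbove (Set.range fun x => |B x p.1 p.2|) := fun p =>
    (hB.zPeriodic.comp fun b => |b p.1 p.2|).isCompact_range (hB.1 p.1 p.2).abs |>.bddAbove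
  choose C hC using hbdd
  obtain ⟨C', hC'⟩ := Finite.bddAbove_range C
  exact ⟨max C' 0, le_max_right _ _, fun x i j =>
    (hC (i, j) ⟨x, rfl⟩).trans ((hC' ⟨(i, j), rfl⟩).trans (le_max_left _ _))⟩

lemma exists_pos_forall_le_neg_of_ne_univ (hB : IsCouplingField B) {I : Finset (Fin m)}
    (hI : I.Nonempty) (hIu : I ≠ univ) :
    ∃ δ > 0, ∀ x, ∃ i ∈ I, ∃ j, j ∉ I ∧ δ ≤ -B x i j := by
  classical
  have hirr := fun x => (hB.2.2 x).2.2 I hI hIu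
  have hne : (I ×ˢ Iᶜ).Nonempty := by
    obtain ⟨i, hi, j, hj, -⟩ := hirr 0
    exact ⟨(i, j), mem_product.2 ⟨hi, mem_compl.2 hj⟩⟩
  set F : Euc N → ℝ := fun x => (I ×ˢ Iᶜ).sup' hne fun p => -B x p.1 p.2
  have hFc : Continuous F := Continuous.finset_sup'_apply hne fun p _ => (hB.1 p.1 p.2).neg
  have hFpos : ∀ x, 0 < F x := fun x => by
    obtain ⟨i, hi, j, hj, hne0⟩ := hirr x
    have hoff : B x i j ≤ 0 := (hB.2.2 x).1.1 i j (ne_of_mem_of_not_mem hi hj).symm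
    exact (neg_pos.2 (hoff.lt_of_ne hne0)).trans_le
      (le_sup' (fun p => -B x p.1 p.2) (mem_product.2 ⟨hi, mem_compl.2 hj⟩ : (i, j) ∈ _))
  obtain ⟨δ, hδ, hδF⟩ := (hB.zPeriodic.comp fun b => (I ×ˢ Iᶜ).sup' hne fun p => -b p.1 p.2)
    |>.exists_pos_forall_le hFc hFpos
  refine ⟨δ, hδ, fun x => ?_⟩
  obtain ⟨⟨i, j⟩, hij, hFx⟩ := exists_mem_eq_sup' hne fun p => -B x p.1 p.2
  obtain ⟨hi, hj⟩ := mem_product.1 hij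
  exact ⟨i, hi, j, mem_compl.1 hj, (hδF x).trans_eq hFx⟩

lemma exists_pos_uniformly_irreducible (hB : IsCouplingField B) :
    ∃ ε > 0, ∀ x (I : Finset (Fin m)), I.Nonempty → I ≠ univ →
      ∃ i ∈ I, ∃ j, j ∉ I ∧ ε ≤ -B x i j := by
  have : ∀ I : Finset (Fin m), ∃ δ > 0, I.Nonempty → I ≠ univ →
      ∀ x, ∃ i ∈ I, ∃ j, j ∉ I ∧ δ ≤ -B x i j := fun I => by
    by_cases hI : I.Nonempty ∧ I ≠ univ
    · obtain ⟨δ, hδ, h⟩ := hB.exists_pos_forall_le_neg_of_ne_univ hI.1 hI.2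
      exact ⟨δ, hδ, fun _ _ => h⟩
    · exact ⟨1, one_pos, fun h₁ h₂ => absurd ⟨h₁, h₂⟩ hI⟩
  choose δ hδ hδI using this
  obtain ⟨I₀, hI₀⟩ := Finite.exists_min δ
  refine ⟨δ I₀, hδ I₀, fun x I hI hIu => ?_⟩
  obtain ⟨i, hi, j, hj, hδij⟩ := hδI I hI hIu x
  exact ⟨i, hi, j, hj, (hI₀ I).trans hδij⟩

end IsCouplingField

theorem stmt2_general {N m : ℕ}
    (B : Euc N → Fin m → Fin m → ℝ) (hB : IsCouplingField B) (a : Fin m → ℝ) :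
    ∃ M : ℝ, 0 ≤ M ∧
      ∀ u : Fin m → Euc N → ℝ, (∀ i, Continuous (u i)) → (∀ i, ZPeriodic (u i)) →
        (∀ (x : Euc N) (i : Fin m), ∑ j, B x i j * u j x ≤ a i) →
        (∀ (x : Euc N) (i j : Fin m), |u i x - u j x| ≤ M) ∧
        (∀ (x : Euc N) (i : Fin m), |∑ j, B x i j * u j x| ≤ M) := by
  obtain ⟨C, hC₀, hC⟩ := hB.exists_nonneg_forall_abs_le
  obtain ⟨ε, hε, hirr⟩ := hB.exists_pos_uniformly_irreducible
  obtain ⟨A, hA⟩ := Finite.bddAbove_range a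
  set D := gapBound m (max A 0) C ε m
  have hD₀ : 0 ≤ D := gapBound_nonneg (le_max_right _ _) hC₀ hε m
  refine ⟨D + m * C * D, by positivity, fun u _ _ hu => ?_⟩
  have hgap : ∀ x i j, |u i x - u j x| ≤ D := fun x i j => by
    have hsub := sub_le_gapBound_of_irreducible (v := fun l => u l x) (le_max_right A 0)
      (hC x) hε (hB.2.2 x).1.1 (hB.2.2 x).2.1 (hirr x)
      (fun i => (hu x i).trans ((hA ⟨i, rfl⟩).trans (le_max_left _ _)))
    simpa only [Fintype.card_fin] using abs_sub_le_iff.2 ⟨hsub i j, hsub j i⟩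
  refine ⟨fun x i j => (hgap x i j).trans (le_add_of_nonneg_right (by positivity)), fun x i => ?_⟩
  have := abs_sum_mul_le ((hB.2.2 x).2.1 i) (hC x i) fun j => hgap x j i
  rw [Fintype.card_fin] at this
  exact this.trans (le_add_of_nonneg_left hD₀)

/-- a priori bounds for continuous functions satisfying
`(B(x)u(x))_i ≤ a_i`. -/
theorem stmt2 {N m : ℕ} (hN : 0 < N) (hm : 0 < m)
    (B : Euc N → Fin m → Fin m → ℝ) (hB : IsCouplingField B) (a : Fin m → ℝ) :
    ∃ M : ℝ, 0 ≤ M ∧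
      ∀ u : Fin m → Euc N → ℝ, (∀ i, Continuous (u i)) → (∀ i, ZPeriodic (u i)) →
        (∀ (x : Euc N) (i : Fin m), ∑ j, B x i j * u j x ≤ a i) →
        (∀ (x : Euc N) (i j : Fin m), |u i x - u j x| ≤ M) ∧
        (∀ (x : Euc N) (i : Fin m), |∑ j, B x i j * u j x| ≤ M) :=
  stmt2_general B hB a

end
end

section
/- Let B(x) be an m×m matrix with continuous coefficients on T^N such that B(x) is an irreducible coupling matrix for every x ∈ T^N and B(x) is invertible for every x ∈ T^N. Let a ∈ ℝ^m and let v, u : T^N → ℝ^m be continuous functions that are, respectively, a viscosity subsolution and a viscosity supersolution of the system H_i(x,Du_i) + (B(x)u(x))_i = a_i in T^N (i = 1,…,m). Then v(x) ≤ u(x) componentwise for every x ∈ T^N. -/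
open Filter MeasureTheory

noncomputable section

/-!
Let `M` be the maximum of `v i x - u i x` over all indices and points; it is attained by
periodicity, say at `(i₀, x₀)`, and we suppose `M > 0`. For every index `i` with
`v i x₀ - u i x₀ = M`, doubling the variables around `x₀` and letting the penalization blow up
yields `(B(x₀)(v - u)(x₀))_i ≤ 0`. For a coupling matrix this forces row `i` to sum to zero and
to couple `i` only to indices where the maximum is attained as well; by irreducibility these are
all indices, so `B(x₀)` kills the constant vector `(1, …, 1)`, contradicting invertibility.
-/

open Topology Function

lemma ZPeriodic.exists_forall_le {N : ℕ} {f : Euc N → ℝ} (hf : Continuous f)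
    (hper : ZPeriodic f) : ∃ x₀, ∀ x, f x ≤ f x₀ := by
  have hcube : IsCompact (WithLp.toLp 2 '' Set.univ.pi fun _ : Fin N => Set.Icc (0 : ℝ) 1) :=
    (isCompact_univ_pi fun _ => isCompact_Icc).image (PiLp.continuous_toLp 2 _)
  obtain ⟨x₀, -, hx₀⟩ := hcube.exists_isMaxOn
    ⟨_, _, fun _ _ => ⟨le_rfl, zero_le_one⟩, rfl⟩ hf.continuousOn
  refine ⟨x₀, fun x => ?_⟩
  have hfract : x + intVec (fun i => -⌊x i⌋) = WithLp.toLp 2 fun i => Int.fract (x i) := by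
    ext i; simp [intVec, ← Int.self_sub_floor, sub_eq_add_neg]
  rw [← hper x fun i => -⌊x i⌋, hfract]
  exact hx₀ ⟨_, fun i _ => ⟨Int.fract_nonneg _, (Int.fract_lt_one _).le⟩, rfl⟩

lemma ZPeriodic.exists_forall_le_of_finite {N : ℕ} {ι : Type*} [Finite ι] [Nonempty ι]
    {f : ι → Euc N → ℝ} (hf : ∀ i, Continuous (f i)) (hper : ∀ i, ZPeriodic (f i)) :
    ∃ i₀ x₀, ∀ i x, f i x ≤ f i₀ x₀ := by
  choose x₀ hx₀ using fun i => (hper i).exists_forall_le (hf i)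
  obtain ⟨i₀, hi₀⟩ := Finite.exists_max fun i => f i (x₀ i)
  exact ⟨i₀, x₀ i₀, fun i x => (hx₀ i x).trans (hi₀ i)⟩

lemma ZPeriodic.bddAbove_range {N : ℕ} {f : Euc N → ℝ} (hf : Continuous f)
    (hper : ZPeriodic f) : BddAbove (Set.range f) := by
  obtain ⟨x₀, hx₀⟩ := hper.exists_forall_le hf
  exact ⟨f x₀, Set.forall_mem_range.2 hx₀⟩

lemma ZPeriodic.bddBelow_range {N : ℕ} {f : Euc N → ℝ} (hf : Continuous f)
    (hper : ZPeriodic f) : BddBelow (Set.range f) := by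
  obtain ⟨x₀, hx₀⟩ :=
    ZPeriodic.exists_forall_le hf.neg fun x k => congrArg Neg.neg (hper x k)
  exact ⟨f x₀, Set.forall_mem_range.2 fun x => neg_le_neg_iff.1 (hx₀ x)⟩

lemma Matrix.not_isUnit_of_isDegenerateMat {m : ℕ} [NeZero m] {b : Fin m → Fin m → ℝ}
    (hb : IsDegenerateMat b) : ¬ IsUnit (Matrix.of b) := by
  intro hunit
  have hker : (Matrix.of b).mulVec (fun _ => 1) = (Matrix.of b).mulVec 0 := by
    ext i; simpa [Matrix.mulVec, dotProduct] using hb i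
  simpa using congrFun (Matrix.mulVec_injective_iff_isUnit.2 hunit hker) 0

lemma IsCouplingMat.rowSum_eq_zero_and_support_of_isMax {m : ℕ} {b : Fin m → Fin m → ℝ} (hb : IsCouplingMat b)
    {w : Fin m → ℝ} {M : ℝ} (hpos : 0 < M) (hle : ∀ j, w j ≤ M) {i : Fin m} (hi : w i = M)
    (hsub : ∑ j, b i j * w j ≤ 0) : ∑ j, b i j = 0 ∧ ∀ j, b i j ≠ 0 → w j = M := by
  have hterm : ∀ j ∈ Finset.univ, 0 ≤ b i j * (w j - M) := fun j _ => by
    rcases eq_or_ne j i with rfl | hji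
    · simp [hi]
    · exact mul_nonneg_of_nonpos_of_nonpos (hb.1 i j hji) (sub_nonpos.2 (hle j))
  have hsplit : ∑ j, b i j * w j = ∑ j, b i j * (w j - M) + M * ∑ j, b i j := by
    rw [Finset.mul_sum, ← Finset.sum_add_distrib]; exact Finset.sum_congr rfl fun j _ => by ring
  have hrow : 0 ≤ M * ∑ j, b i j := mul_nonneg hpos.le (hb.2 i)
  have hterms : ∑ j, b i j * (w j - M) = 0 := by
    linarith [Finset.sum_nonneg hterm]
  refine ⟨by nlinarith [Finset.sum_nonneg hterm], fun j hbij => ?_⟩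
  have := (Finset.sum_eq_zero_iff_of_nonneg hterm).1 hterms j (Finset.mem_univ j)
  linarith [(mul_eq_zero.1 this).resolve_left hbij]

lemma IsIrreducibleMat.isDegenerateMat_of_isMax {m : ℕ} {b : Fin m → Fin m → ℝ}
    (hirr : IsIrreducibleMat b) (hb : IsCouplingMat b) {w : Fin m → ℝ} {i₀ : Fin m}
    (hle : ∀ j, w j ≤ w i₀) (hpos : 0 < w i₀)
    (hsub : ∀ i, w i = w i₀ → ∑ j, b i j * w j ≤ 0) : IsDegenerateMat b := by
  classical
  have hrow := fun i (hi : w i = w i₀) => hb.rowSum_eq_zero_and_support_of_isMax hpos hle hi (hsub i hi)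
  have hall : ∀ i, w i = w i₀ := by
    by_contra! ⟨k, hk⟩
    obtain ⟨i, hi, j, hj, hbij⟩ := hirr {i | w i = w i₀} ⟨i₀, by simp⟩
      fun h => hk (by simpa using Finset.eq_univ_iff_forall.1 h k)
    simp only [Finset.mem_filter, Finset.mem_univ, true_and] at hi hj
    exact hj ((hrow i hi).2 j hbij)
  exact fun i => (hrow i (hall i)).1

section Doubling

variable {E : Type*} [NormedAddCommGroup E]

/-- The term `‖x - x₀‖ ^ 2` makes `(x₀, x₀)` a strict maximum of the diagonal, so that the
maximizers converge to it as `c → ∞`. -/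
def doublingPenalty (f : E → E → ℝ) (x₀ : E) (c : ℝ) (z : E × E) : ℝ :=
  f z.1 z.2 - c * ‖z.1 - z.2‖ ^ 2 - ‖z.1 - x₀‖ ^ 2

variable {f : E → E → ℝ} {x₀ : E} {c C : ℝ}

lemma doublingPenalty_diag : doublingPenalty f x₀ c (x₀, x₀) = f x₀ x₀ := by
  simp [doublingPenalty]

lemma mem_closedBall_of_le_doublingPenalty (hC : ∀ x y, f x y ≤ C) (hc : 1 ≤ c) {z : E × E}
    (hz : f x₀ x₀ ≤ doublingPenalty f x₀ c z) :
    z ∈ Metric.closedBall x₀ (2 * (C - f x₀ x₀ + 1)) ×ˢ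
      Metric.closedBall x₀ (2 * (C - f x₀ x₀ + 1)) := by
  have hfz := hC z.1 z.2
  have hd := norm_nonneg (z.1 - z.2)
  have h₀ := norm_nonneg (z.1 - x₀)
  have htri : ‖z.2 - x₀‖ ≤ ‖z.1 - z.2‖ + ‖z.1 - x₀‖ := by
    simpa [norm_sub_rev z.1 z.2] using norm_sub_le_norm_sub_add_norm_sub z.2 z.1 x₀
  unfold doublingPenalty at hz
  have hd₂ : ‖z.1 - z.2‖ ≤ C - f x₀ x₀ + 1 := by
    nlinarith [mul_le_mul_of_nonneg_right hc (sq_nonneg ‖z.1 - z.2‖),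
      sq_nonneg (‖z.1 - z.2‖ - 1)]
  have h₀₂ : ‖z.1 - x₀‖ ≤ C - f x₀ x₀ + 1 := by
    nlinarith [mul_nonneg (zero_le_one.trans hc) (sq_nonneg ‖z.1 - z.2‖),
      sq_nonneg (‖z.1 - x₀‖ - 1)]
  simp only [Set.mem_prod, Metric.mem_closedBall, dist_eq_norm]
  constructor <;> linarith

lemma exists_forall_doublingPenalty_le [ProperSpace E] (hf : Continuous (uncurry f))
    (hC : ∀ x y, f x y ≤ C) (hc : 1 ≤ c) :
    ∃ z, ∀ z', doublingPenalty f x₀ c z' ≤ doublingPenalty f x₀ c z := by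
  have hcont : Continuous (doublingPenalty f x₀ c) := by unfold doublingPenalty; fun_prop
  refine hcont.exists_forall_ge' (x₀, x₀) ?_
  have hK := ((isCompact_closedBall x₀ (2 * (C - f x₀ x₀ + 1))).prod
    (isCompact_closedBall x₀ (2 * (C - f x₀ x₀ + 1)))).compl_mem_cocompact
  filter_upwards [hK] with z hz
  rw [doublingPenalty_diag]
  exact le_of_not_ge fun h => hz (mem_closedBall_of_le_doublingPenalty hC hc h)

lemma eq_of_tendsto_doublingPenalty_maximizers (hf : Continuous (uncurry f))
    (hC : ∀ x y, f x y ≤ C) (hdiag : ∀ x, f x x ≤ f x₀ x₀) {z : ℕ → E × E}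
    (hz : ∀ n : ℕ, f x₀ x₀ ≤ doublingPenalty f x₀ (n + 1) (z n)) {σ : ℕ → ℕ}
    (hσ : StrictMono σ) {zlim : E × E} (hlim : Tendsto (z ∘ σ) atTop (𝓝 zlim)) :
    zlim = (x₀, x₀) := by
  have hgap (n : ℕ) : ‖(z n).1 - (z n).2‖ ^ 2 ≤ (C - f x₀ x₀) / (n + 1) := by
    rw [le_div_iff₀ (by positivity)]
    have := hC (z n).1 (z n).2
    unfold doublingPenalty at hz
    nlinarith [hz n, sq_nonneg ‖(z n).1 - x₀‖]
  have hgap_lim : Tendsto (fun k => (C - f x₀ x₀) / ((σ k : ℝ) + 1)) atTop (𝓝 0) :=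
    (tendsto_const_nhds.div_atTop (tendsto_atTop_add_const_right _ 1
      tendsto_natCast_atTop_atTop)).comp hσ.tendsto_atTop
  have hdist : ‖zlim.1 - zlim.2‖ ^ 2 ≤ 0 :=
    le_of_tendsto_of_tendsto' (((by fun_prop : Continuous fun w : E × E => ‖w.1 - w.2‖ ^ 2)
      |>.tendsto zlim).comp hlim) hgap_lim fun k => hgap (σ k)
  have hval : f x₀ x₀ ≤ f zlim.1 zlim.2 - ‖zlim.1 - x₀‖ ^ 2 := by
    refine ge_of_tendsto' (((by fun_prop : Continuous fun w : E × E =>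
      f w.1 w.2 - ‖w.1 - x₀‖ ^ 2).tendsto zlim).comp hlim) fun k => ?_
    have := hz (σ k)
    unfold doublingPenalty at this
    simp only [comp_apply]
    nlinarith [sq_nonneg ‖(z (σ k)).1 - (z (σ k)).2‖]
  have h₂ : zlim.2 = zlim.1 := by
    rw [← sub_eq_zero, ← norm_eq_zero]
    nlinarith [norm_nonneg (zlim.1 - zlim.2), norm_sub_rev zlim.1 zlim.2]
  rw [h₂] at hval
  have h₁ : zlim.1 = x₀ := by
    rw [← sub_eq_zero, ← norm_eq_zero]
    nlinarith [hdiag zlim.1, norm_nonneg (zlim.1 - x₀)]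
  exact Prod.ext h₁ (h₂.trans h₁)

end Doubling

section Gradient

variable {F : Type*} [NormedAddCommGroup F] [InnerProductSpace ℝ F]

lemma HasGradientAt.add [CompleteSpace F] {f g : F → ℝ} {f' g' x : F}
    (hf : HasGradientAt f f' x) (hg : HasGradientAt g g' x) :
    HasGradientAt (fun y => f y + g y) (f' + g') x := by
  rw [hasGradientAt_iff_hasFDerivAt, map_add]
  exact hf.hasFDerivAt.add hg.hasFDerivAt

lemma hasGradientAt_mul_norm_sub_sq [CompleteSpace F] (c : ℝ) (b x : F) :
    HasGradientAt (fun y => c * ‖y - b‖ ^ 2) ((2 * c) • (x - b)) x := by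
  rw [hasGradientAt_iff_hasFDerivAt]
  refine ((((hasFDerivAt_id x).sub_const b).norm_sq).const_mul c).congr_fderiv ?_
  ext y
  simp only [id_eq, map_sub, ContinuousLinearMap.comp_id, smul_apply,
    sub_apply, coe_innerSL_apply, nsmul_eq_mul, Nat.cast_ofNat, smul_eq_mul,
    map_smul, InnerProductSpace.toDual_apply_apply]
  ring

lemma contDiff_mul_norm_sub_sq (c : ℝ) (b : F) :
    ContDiff ℝ 1 fun y => c * ‖y - b‖ ^ 2 :=
  contDiff_const.mul ((contDiff_norm_sq ℝ).comp (contDiff_id.sub contDiff_const))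

end Gradient

section Viscosity

variable {N m : ℕ} {H : Fin m → Euc N → Euc N → ℝ} {B : Euc N → Fin m → Fin m → ℝ}
  {a : Fin m → ℝ} {v u : Fin m → Euc N → ℝ} {i : Fin m} {x₀ : Euc N} {c : ℝ}

lemma IsSubSol.le_of_forall_doublingPenalty_le (hsub : IsSubSol H B a v) {z : Euc N × Euc N}
    (hz : ∀ z', doublingPenalty (fun x y => v i x - u i y) x₀ c z' ≤
      doublingPenalty (fun x y => v i x - u i y) x₀ c z) :
    H i z.1 ((2 * c) • (z.1 - z.2) + (2 : ℝ) • (z.1 - x₀)) + ∑ j, B z.1 i j * v j z.1 ≤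
      a i := by
  have hφ :=
    (hasGradientAt_mul_norm_sub_sq c z.2 z.1).add (hasGradientAt_mul_norm_sub_sq 1 x₀ z.1)
  rw [mul_one] at hφ
  rw [← hφ.gradient]
  refine hsub i z.1 _ ((contDiff_mul_norm_sub_sq c z.2).add (contDiff_mul_norm_sub_sq 1 x₀))
    (Eventually.of_forall fun x => ?_)
  have := hz (x, z.2)
  simp only [doublingPenalty] at this
  linarith

lemma IsSuperSol.le_of_forall_doublingPenalty_le (hsup : IsSuperSol H B a u) {z : Euc N × Euc N}
    (hz : ∀ z', doublingPenalty (fun x y => v i x - u i y) x₀ c z' ≤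
      doublingPenalty (fun x y => v i x - u i y) x₀ c z) :
    a i ≤ H i z.2 ((2 * c) • (z.1 - z.2)) + ∑ j, B z.2 i j * u j z.2 := by
  have hψ := hasGradientAt_mul_norm_sub_sq (-c) z.1 z.2
  rw [mul_neg, neg_smul, ← smul_neg, neg_sub] at hψ
  rw [← hψ.gradient]
  refine hsup i z.2 _ (contDiff_mul_norm_sub_sq (-c) z.1) (Eventually.of_forall fun y => ?_)
  have := hz (z.1, y)
  simp only [doublingPenalty, norm_sub_rev z.1] at this
  linarith

lemma exists_norm_le_of_hamiltonian_le
    (hcoer : ∃ α : ℝ → ℝ, Tendsto α atTop atTop ∧ ∀ x p, α ‖p‖ ≤ H i x p)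
    (hBc : ∀ j, Continuous fun x => B x i j) (hvc : ∀ j, Continuous (v j))
    {K : Set (Euc N)} (hK : IsCompact K) :
    ∃ R, ∀ x ∈ K, ∀ p, H i x p + ∑ j, B x i j * v j x ≤ a i → ‖p‖ ≤ R := by
  obtain ⟨C, hC⟩ := hK.bddAbove_image (f := fun x => a i - ∑ j, B x i j * v j x) (by fun_prop)
  obtain ⟨α, hα, hαH⟩ := hcoer
  obtain ⟨R, hR⟩ := (hα.eventually_gt_atTop C).exists_forall_of_atTop
  refine ⟨R, fun x hx p hp => le_of_not_ge fun hpR => (hR _ hpR).not_ge ?_⟩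
  linarith [hC ⟨x, hx, rfl⟩, hαH x p]

lemma sum_coupling_mul_sub_nonpos_of_tendsto
    (hHc : Continuous fun q : Euc N × Euc N => H i q.1 q.2)
    (hBc : ∀ j, Continuous fun x => B x i j) (hvc : ∀ j, Continuous (v j))
    (huc : ∀ j, Continuous (u j)) {z : ℕ → Euc N × Euc N} {g q : ℕ → Euc N} {p : Euc N}
    (hz : Tendsto z atTop (𝓝 (x₀, x₀))) (hg : Tendsto g atTop (𝓝 p))
    (hq : Tendsto q atTop (𝓝 0))
    (hsub : ∀ n, H i (z n).1 (g n) + ∑ j, B (z n).1 i j * v j (z n).1 ≤ a i)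
    (hsup : ∀ n, a i ≤ H i (z n).2 (g n - q n) + ∑ j, B (z n).2 i j * u j (z n).2) :
    ∑ j, B x₀ i j * (v j x₀ - u j x₀) ≤ 0 := by
  have hlim_sub := ((hHc.add (by fun_prop : Continuous fun w : Euc N × Euc N =>
    ∑ j, B w.1 i j * v j w.1)).tendsto (x₀, p)).comp (hz.fst_nhds.prodMk_nhds hg)
  have hlim_sup := ((hHc.add (by fun_prop : Continuous fun w : Euc N × Euc N =>
    ∑ j, B w.1 i j * u j w.1)).tendsto (x₀, p - 0)).comp (hz.snd_nhds.prodMk_nhds (hg.sub hq))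
  have := le_of_tendsto_of_tendsto' hlim_sub hlim_sup fun n => (hsub n).trans (hsup n)
  simp only [sub_zero, Pi.add_apply, add_le_add_iff_left] at this
  simpa only [mul_sub, Finset.sum_sub_distrib, sub_nonpos] using this

theorem sum_coupling_mul_sub_nonpos_of_isMax
    (hHc : Continuous fun q : Euc N × Euc N => H i q.1 q.2)
    (hcoer : ∃ α : ℝ → ℝ, Tendsto α atTop atTop ∧ ∀ x p, α ‖p‖ ≤ H i x p)
    (hBc : ∀ j, Continuous fun x => B x i j) (hvc : ∀ j, Continuous (v j))
    (huc : ∀ j, Continuous (u j)) (hvb : BddAbove (Set.range (v i)))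
    (hub : BddBelow (Set.range (u i))) (hsub : IsSubSol H B a v) (hsup : IsSuperSol H B a u)
    (hmax : ∀ x, v i x - u i x ≤ v i x₀ - u i x₀) :
    ∑ j, B x₀ i j * (v j x₀ - u j x₀) ≤ 0 := by
  set f : Euc N → Euc N → ℝ := fun x y => v i x - u i y
  have hf : Continuous (uncurry f) := by simp only [f]; fun_prop
  obtain ⟨Cv, hCv⟩ := hvb
  obtain ⟨Cu, hCu⟩ := hub
  have hC (x y : Euc N) : f x y ≤ Cv - Cu := sub_le_sub (hCv ⟨x, rfl⟩) (hCu ⟨y, rfl⟩)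
  choose z hz using fun n : ℕ =>
    exists_forall_doublingPenalty_le (x₀ := x₀) (c := n + 1) hf hC (by simp)
  have hzM : ∀ n : ℕ, f x₀ x₀ ≤ doublingPenalty f x₀ (n + 1) (z n) := fun n => by
    simpa only [doublingPenalty_diag] using hz n (x₀, x₀)
  set r := 2 * (Cv - Cu - f x₀ x₀ + 1)
  have hzK (n : ℕ) := mem_closedBall_of_le_doublingPenalty hC (by simp) (hzM n)
  set q : ℕ → Euc N := fun n => (2 : ℝ) • ((z n).1 - x₀)
  set g : ℕ → Euc N := fun n => (2 * ((n : ℝ) + 1)) • ((z n).1 - (z n).2) + q n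
  have hsubn n := hsub.le_of_forall_doublingPenalty_le (hz n)
  have hsupn n := hsup.le_of_forall_doublingPenalty_le (hz n)
  obtain ⟨R, hR⟩ :=
    exists_norm_le_of_hamiltonian_le (a := a) hcoer hBc hvc (isCompact_closedBall x₀ r)
  obtain ⟨⟨zlim, p⟩, -, σ, hσ, hlim⟩ := ((isCompact_closedBall x₀ r).prod
    (isCompact_closedBall x₀ r) |>.prod (isCompact_closedBall 0 R)).tendsto_subseq
    (x := fun n => (z n, g n)) fun n => ⟨hzK n, mem_closedBall_zero_iff.2
      (hR _ (hzK n).1 _ (hsubn n))⟩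
  have hzlim : zlim = (x₀, x₀) := eq_of_tendsto_doublingPenalty_maximizers hf hC
    (fun x => by simpa [f] using hmax x) hzM hσ hlim.fst_nhds
  subst hzlim
  refine sum_coupling_mul_sub_nonpos_of_tendsto hHc hBc hvc huc hlim.fst_nhds hlim.snd_nhds
    (q := q ∘ σ) ?_ (fun k => hsubn (σ k)) fun k => ?_
  · have hq : Continuous fun x : Euc N => (2 : ℝ) • (x - x₀) := by fun_prop
    simpa [q, comp_def] using (hq.tendsto x₀).comp hlim.fst_nhds.fst_nhds
  · simpa only [g, comp_apply, add_sub_cancel_right] using hsupn (σ k)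

end Viscosity

theorem stmt6_general {N m : ℕ}
    (H : Fin m → Euc N → Euc N → ℝ) (hH : ∀ i, IsConvexHamiltonian (H i))
    (B : Euc N → Fin m → Fin m → ℝ)
    (hBcont : ∀ i j, Continuous fun x => B x i j)
    (hBC : ∀ x, IsCouplingMat (B x)) (hBI : ∀ x, IsIrreducibleMat (B x))
    (hBinv : ∀ x : Euc N, IsUnit (Matrix.of fun i j => B x i j))
    (a : Fin m → ℝ)
    (v u : Fin m → Euc N → ℝ) (hv : IsTorusFun v) (hu : IsTorusFun u)
    (hsub : IsSubSol H B a v) (hsup : IsSuperSol H B a u) :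
    ∀ (x : Euc N) (i : Fin m), v i x ≤ u i x := by
  intro x i
  by_contra! hlt
  have : NeZero m := ⟨i.pos.ne'⟩
  obtain ⟨i₀, x₀, hmax⟩ :=
    ZPeriodic.exists_forall_le_of_finite (f := fun j y => v j y - u j y)
      (fun j => (hv.1 j).sub (hu.1 j)) fun j y k => by simp only [hv.2 j y k, hu.2 j y k]
  refine Matrix.not_isUnit_of_isDegenerateMat ?_ (hBinv x₀)
  refine (hBI x₀).isDegenerateMat_of_isMax (hBC x₀) (w := fun j => v j x₀ - u j x₀)
    (fun j => hmax j x₀) ((sub_pos.2 hlt).trans_le (hmax i x)) fun j hj => ?_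
  obtain ⟨α, _, hα, -, hαH⟩ := (hH j).2.2.2
  exact sum_coupling_mul_sub_nonpos_of_isMax (hH j).1 ⟨α, hα, fun x p => (hαH x p).1⟩
    (hBcont j) hv.1 hu.1 ((hv.2 j).bddAbove_range (hv.1 j)) ((hu.2 j).bddBelow_range (hu.1 j))
    hsub hsup fun y => (hmax j y).trans hj.ge

/-- comparison principle when the (irreducible) coupling matrix is
everywhere invertible. -/
theorem stmt6 {N m : ℕ} (hN : 0 < N) (hm : 0 < m)
    (H : Fin m → Euc N → Euc N → ℝ) (hH : ∀ i, IsConvexHamiltonian (H i))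
    (B : Euc N → Fin m → Fin m → ℝ)
    (hBcont : ∀ i j, Continuous fun x => B x i j)
    (hBper : ∀ i j, ZPeriodic fun x => B x i j)
    (hBC : ∀ x, IsCouplingMat (B x)) (hBI : ∀ x, IsIrreducibleMat (B x))
    (hBinv : ∀ x : Euc N, IsUnit (Matrix.of fun i j => B x i j))
    (a : Fin m → ℝ)
    (v u : Fin m → Euc N → ℝ) (hv : IsTorusFun v) (hu : IsTorusFun u)
    (hsub : IsSubSol H B a v) (hsup : IsSuperSol H B a u) :
    ∀ (x : Euc N) (i : Fin m), v i x ≤ u i x :=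
  stmt6_general H hH B hBcont hBC hBI hBinv a v u hv hu hsub hsup

end
end

section
/- Let a, b ∈ ℝ and let v, u : T^N → ℝ^m be continuous functions such that, in the viscosity sense, H_i(x,Dv_i) + (B(x)v(x))_i ≤ a in T^N and H_i(x,Du_i) + (B(x)u(x))_i ≥ b in T^N for every i ∈ {1,…,m} (i.e. v is a viscosity subsolution of the system with right-hand side a𝟙 and u is a viscosity supersolution of the system with right-hand side b𝟙). Then b ≤ a. -/
open Filter MeasureTheory

noncomputable section

/-! Doubling of variables. Maximise `v_i(x) - u_i(y) - c‖x - y‖²` over `i, x, y`; the maximum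
exists because the functions are periodic and bounded. At a maximum the quadratic penalty is a
test function for `v_i` at `x` and for `u_i` at `y`, with the same momentum `p = 2c(x - y)`. Since
`i` maximises `v_j(x) - u_j(y)` and `B(x)` has nonpositive off-diagonal entries and zero row sums,
`(B(x)u(y))_i ≤ (B(x)v(x))_i`, so subtracting the two viscosity inequalities gives
`b - a ≤ F_i(y, p, y) - F_i(x, p, y)` with `F_i(x, p, w) = H_i(x, p) + (B(x)u(w))_i`.
Coercivity of `H_i` bounds `p` independently of `c`, while `‖x - y‖ → 0` as `c → ∞`, so uniform
continuity of `F` on a compact set makes the right-hand side arbitrarily small. -/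

open Metric

theorem exists_intVec_norm_add_le {N : ℕ} (x : Euc N) :
    ∃ k : Fin N → ℤ, ‖x + intVec k‖ ≤ N := by
  refine ⟨fun i => -⌊x i⌋, ?_⟩
  have hfract : ∀ i, (x + intVec fun i => -⌊x i⌋) i = Int.fract (x i) := fun i => by
    simp [intVec, Int.fract, sub_eq_add_neg]
  calc ‖x + intVec fun i => -⌊x i⌋‖
      = √(∑ i, ‖Int.fract (x i)‖ ^ 2) := by simp only [EuclideanSpace.norm_eq, hfract]
    _ ≤ √(∑ _i : Fin N, (1 : ℝ)) := by
        gcongr with i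
        rw [Real.norm_of_nonneg (Int.fract_nonneg _)]
        exact pow_le_one₀ (Int.fract_nonneg _) (Int.fract_lt_one _).le
    _ = √N := by simp
    _ ≤ N := Real.sqrt_le_iff.2 ⟨N.cast_nonneg, by exact_mod_cast Nat.le_self_pow two_ne_zero N⟩

theorem ZPeriodic.exists_norm_le {N : ℕ} {E : Type*} [SeminormedAddCommGroup E]
    {f : Euc N → E} (hf : ZPeriodic f) (hfc : Continuous f) : ∃ C, ∀ x, ‖f x‖ ≤ C := by
  obtain ⟨C, hC⟩ := (isCompact_closedBall (0 : Euc N) N).exists_bound_of_continuousOn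
    hfc.continuousOn
  refine ⟨C, fun x => ?_⟩
  obtain ⟨k, hk⟩ := exists_intVec_norm_add_le x
  rw [← hf x k]
  exact hC _ (mem_closedBall_zero_iff.2 hk)

theorem IsTorusFun.exists_abs_le {N m : ℕ} {u : Fin m → Euc N → ℝ} (hu : IsTorusFun u) :
    ∃ C, ∀ i x, |u i x| ≤ C := by
  obtain ⟨C, hC⟩ := ZPeriodic.exists_norm_le (f := fun x i => u i x)
    (fun x k => funext fun i => hu.2 i x k) (continuous_pi hu.1)
  exact ⟨C, fun i x => (norm_le_pi_norm (fun i => u i x) i).trans (hC x)⟩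

theorem IsCouplingField.isTorusFun_sum_mul {N m : ℕ} {B : Euc N → Fin m → Fin m → ℝ}
    (hB : IsCouplingField B) {v : Fin m → Euc N → ℝ} (hv : IsTorusFun v) :
    IsTorusFun fun i x => ∑ j, B x i j * v j x :=
  ⟨fun i => continuous_finsetSum _ fun j _ => (hB.1 i j).mul (hv.1 j),
    fun i x k => Finset.sum_congr rfl fun j _ =>
      congrArg₂ (· * ·) (hB.2.1 i j x k) (hv.2 j x k)⟩

theorem IsCompact.exists_forall_le_of_forall_exists_le {X α : Type*} [TopologicalSpace X]
    [LinearOrder α] [TopologicalSpace α] [ClosedIciTopology α] {K : Set X} {f : X → α}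
    (hK : IsCompact K) (hne : K.Nonempty) (hf : ContinuousOn f K)
    (hdom : ∀ x, ∃ y ∈ K, f x ≤ f y) : ∃ x₀ ∈ K, ∀ x, f x ≤ f x₀ := by
  obtain ⟨x₀, hx₀, hmax⟩ := hK.exists_isMaxOn hne hf
  refine ⟨x₀, hx₀, fun x => ?_⟩
  obtain ⟨y, hy, hxy⟩ := hdom x
  exact hxy.trans (hmax hy)

theorem IsCompact.exists_forall_dist_lt {X Y ι : Type*} [PseudoMetricSpace X]
    [PseudoMetricSpace Y] [Fintype ι] {K : Set X} (hK : IsCompact K) {f : ι → X → Y}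
    (hf : ∀ i, Continuous (f i)) {η : ℝ} (hη : 0 < η) :
    ∃ δ > 0, ∀ i, ∀ x ∈ K, ∀ y ∈ K, dist x y < δ → dist (f i x) (f i y) < η := by
  obtain ⟨δ, hδ, hunif⟩ := Metric.uniformContinuousOn_iff.1
    (hK.uniformContinuousOn_of_continuous (continuous_pi fun i => hf i).continuousOn) η hη
  exact ⟨δ, hδ, fun i x hx y hy hxy =>
    (dist_le_pi_dist (fun i => f i x) (fun i => f i y) i).trans_lt (hunif x hx y hy hxy)⟩

theorem IsConvexHamiltonian.exists_norm_le_of_le {N : ℕ} {H : Euc N → Euc N → ℝ}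
    (hH : IsConvexHamiltonian H) (c : ℝ) : ∃ R, ∀ x p, H x p ≤ c → ‖p‖ ≤ R := by
  obtain ⟨α, _, hα, _, hbound⟩ := hH.2.2.2
  obtain ⟨R, hR⟩ := eventually_atTop.1 (hα.eventually_gt_atTop c)
  exact ⟨R, fun x p hp =>
    not_lt.1 fun hpR => (hR _ hpR.le).not_ge ((hbound x p).1.trans hp)⟩

theorem IsCouplingMat.sum_mul_le_sum_mul {m : ℕ} {b : Fin m → Fin m → ℝ}
    (hb : IsCouplingMat b) (hdeg : IsDegenerateMat b) {s t : Fin m → ℝ} {i : Fin m}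
    (hmax : ∀ j, s j - t j ≤ s i - t i) : ∑ j, b i j * t j ≤ ∑ j, b i j * s j := by
  have : ∑ j, b i j * (s i - t i) ≤ ∑ j, b i j * (s j - t j) := by
    refine Finset.sum_le_sum fun j _ => ?_
    rcases eq_or_ne j i with rfl | hji
    · rfl
    · exact mul_le_mul_of_nonpos_left (hmax j) (hb.1 i j hji)
  rw [← Finset.sum_mul, hdeg i, zero_mul] at this
  simpa [mul_sub, Finset.sum_sub_distrib] using this

section TestFunction

variable {E : Type*} [NormedAddCommGroup E] [InnerProductSpace ℝ E]

theorem contDiff_const_mul_norm_sub_sq (n : WithTop ℕ∞) (c : ℝ) (y : E) :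
    ContDiff ℝ n fun z => c * ‖z - y‖ ^ 2 :=
  contDiff_const.mul ((contDiff_id.sub contDiff_const).norm_sq ℝ)

theorem gradient_const_mul_norm_sub_sq [CompleteSpace E] (c : ℝ) (x y : E) :
    gradient (fun z => c * ‖z - y‖ ^ 2) x = (2 * c) • (x - y) := by
  have h : HasFDerivAt (fun z => c * ‖z - y‖ ^ 2) _ x :=
    ((hasFDerivAt_id x).sub_const y).norm_sq.const_mul c
  refine HasGradientAt.gradient (hasGradientAt_iff_hasFDerivAt.2 ?_)
  refine h.congr_fderiv ?_
  ext z
  simp only [id_eq, ContinuousLinearMap.comp_id, smul_apply,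
    coe_innerSL_apply, nsmul_eq_mul, smul_eq_mul, map_smul,
    InnerProductSpace.toDual_apply_apply]
  ring

end TestFunction

def penalizedDiff {N : ℕ} {ι : Type*} (v u : ι → Euc N → ℝ) (c : ℝ) (i : ι) (x y : Euc N) :
    ℝ :=
  v i x - u i y - c * ‖x - y‖ ^ 2

section PenalizedDiff

variable {N m : ℕ} {v u : Fin m → Euc N → ℝ} {c C : ℝ}

theorem penalizedDiff_add_intVec (hv : IsTorusFun v) (hu : IsTorusFun u) (i : Fin m)
    (x y : Euc N) (k : Fin N → ℤ) :
    penalizedDiff v u c i (x + intVec k) (y + intVec k) = penalizedDiff v u c i x y := by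
  simp only [penalizedDiff, hv.2 i x k, hu.2 i y k, add_sub_add_right_eq_sub]

theorem penalizedDiff_le_self_of_le (hC : ∀ i x, |u i x| ≤ C) {i : Fin m} {x y : Euc N}
    (hxy : 2 * C ≤ c * ‖x - y‖ ^ 2) : penalizedDiff v u c i x y ≤ penalizedDiff v u c i x x := by
  simp only [penalizedDiff, sub_self, norm_zero]
  linarith [abs_le.1 (hC i x), abs_le.1 (hC i y)]

theorem exists_isMax_penalizedDiff (hm : 0 < m) (hv : IsTorusFun v) (hu : IsTorusFun u)
    (hc : 0 < c) (hC : ∀ i x, |u i x| ≤ C) :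
    ∃ i x y, ‖x‖ ≤ N ∧ ∀ j x' y', penalizedDiff v u c j x' y' ≤ penalizedDiff v u c i x y := by
  have : Nonempty (Fin m) := ⟨⟨0, hm⟩⟩
  -- off the compact set `K`, the functional is dominated by its value on the diagonal
  set r := √(2 * C / c)
  set K : Set (Euc N × Euc N) := closedBall 0 N ×ˢ closedBall 0 (N + r)
  have hK : IsCompact K := (isCompact_closedBall _ _).prod (isCompact_closedBall _ _)
  have hKne : K.Nonempty := ⟨0, by
    simpa [K] using add_nonneg N.cast_nonneg (Real.sqrt_nonneg _)⟩
  have hcont : ∀ j, Continuous fun q : Euc N × Euc N => penalizedDiff v u c j q.1 q.2 :=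
    fun j => (((hv.1 j).comp continuous_fst).sub ((hu.1 j).comp continuous_snd)).sub
      (continuous_const.mul ((continuous_fst.sub continuous_snd).norm.pow 2))
  have hdom : ∀ j (q : Euc N × Euc N), ∃ q' ∈ K,
      penalizedDiff v u c j q.1 q.2 ≤ penalizedDiff v u c j q'.1 q'.2 := by
    rintro j ⟨x, y⟩
    obtain ⟨k, hk⟩ := exists_intVec_norm_add_le x
    rw [← penalizedDiff_add_intVec hv hu j x y k]
    by_cases hfar : 2 * C ≤ c * ‖x - y‖ ^ 2
    · refine ⟨(x + intVec k, x + intVec k), ⟨?_, ?_⟩, penalizedDiff_le_self_of_le hC ?_⟩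
      · simpa using hk
      · simpa using hk.trans (le_add_of_nonneg_right (Real.sqrt_nonneg _))
      · simpa only [add_sub_add_right_eq_sub] using hfar
    · refine ⟨(x + intVec k, y + intVec k), ⟨by simpa using hk, ?_⟩, le_rfl⟩
      have hr : ‖x - y‖ ≤ r :=
        Real.le_sqrt_of_sq_le ((le_div_iff₀' hc).2 (not_le.1 hfar).le)
      refine mem_closedBall_zero_iff.2 ?_
      calc ‖y + intVec k‖ ≤ ‖x + intVec k‖ + ‖x - y‖ := by
            simpa [norm_sub_rev y x] using
              norm_le_norm_add_norm_sub' (y + intVec k) (x + intVec k)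
        _ ≤ N + r := add_le_add hk hr
  choose q hqK hq using fun j => hK.exists_forall_le_of_forall_exists_le hKne
    (hcont j).continuousOn (hdom j)
  obtain ⟨i, hi⟩ := Finite.exists_max fun j => penalizedDiff v u c j (q j).1 (q j).2
  refine ⟨i, (q i).1, (q i).2, by simpa using (hqK i).1, fun j x' y' => ?_⟩
  exact (hq j (x', y')).trans (hi j)

theorem norm_sub_lt_of_isMax_penalizedDiff (hC : ∀ i x, |u i x| ≤ C) {ρ : ℝ} (hρ : 0 < ρ)
    (hc : 2 * C < c * ρ ^ 2) {i : Fin m} {x y : Euc N}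
    (hmax : penalizedDiff v u c i x x ≤ penalizedDiff v u c i x y) : ‖x - y‖ < ρ := by
  have hC0 : 0 ≤ C := (abs_nonneg _).trans (hC i x)
  have hc0 : 0 < c := by nlinarith [sq_nonneg ρ]
  simp only [penalizedDiff, sub_self, norm_zero] at hmax
  have : c * ‖x - y‖ ^ 2 < c * ρ ^ 2 := by linarith [abs_le.1 (hC i x), abs_le.1 (hC i y)]
  exact (pow_lt_pow_iff_left₀ (norm_nonneg _) hρ.le two_ne_zero).1
    (lt_of_mul_lt_mul_left this hc0.le)

end PenalizedDiff

section Viscosity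

variable {N m : ℕ} {H : Fin m → Euc N → Euc N → ℝ} {B : Euc N → Fin m → Fin m → ℝ}
  {a : Fin m → ℝ} {v u : Fin m → Euc N → ℝ} {c : ℝ} {i : Fin m} {x y : Euc N}

theorem IsSubSol.le_of_forall_penalizedDiff_le (hv : IsSubSol H B a v)
    (hmax : ∀ z, penalizedDiff v u c i z y ≤ penalizedDiff v u c i x y) :
    H i x ((2 * c) • (x - y)) + ∑ j, B x i j * v j x ≤ a i := by
  have hloc : IsLocalMax (fun z => v i z - c * ‖z - y‖ ^ 2) x :=
    Eventually.of_forall fun z => by have := hmax z; simp only [penalizedDiff] at this; linarith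
  simpa only [gradient_const_mul_norm_sub_sq] using
    hv i x _ (contDiff_const_mul_norm_sub_sq 1 c y) hloc

theorem IsSuperSol.le_of_forall_penalizedDiff_le (hu : IsSuperSol H B a u)
    (hmax : ∀ z, penalizedDiff v u c i x z ≤ penalizedDiff v u c i x y) :
    a i ≤ H i y ((2 * c) • (x - y)) + ∑ j, B y i j * u j y := by
  have hloc : IsLocalMin (fun z => u i z - (-c) * ‖z - x‖ ^ 2) y :=
    Eventually.of_forall fun z => by
      have := hmax z
      simp only [penalizedDiff, norm_sub_rev x] at this
      linarith
  have := hu i y _ (contDiff_const_mul_norm_sub_sq 1 (-c) x) hloc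
  rwa [gradient_const_mul_norm_sub_sq, show (2 * -c) • (y - x) = (2 * c) • (x - y) by module]
    at this

end Viscosity

theorem stmt7_general {N m : ℕ} (hm : 0 < m)
    (H : Fin m → Euc N → Euc N → ℝ) (hH : ∀ i, IsConvexHamiltonian (H i))
    (B : Euc N → Fin m → Fin m → ℝ) (hB : IsCouplingField B) (a b : ℝ)
    (v u : Fin m → Euc N → ℝ) (hv : IsTorusFun v) (hu : IsTorusFun u)
    (hsub : IsSubSol H B (fun _ => a) v) (hsup : IsSuperSol H B (fun _ => b) u) :
    b ≤ a := by
  obtain ⟨Cu, hCu⟩ := hu.exists_abs_le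
  have hCu0 : 0 ≤ Cu := (abs_nonneg _).trans (hCu ⟨0, hm⟩ 0)
  obtain ⟨Cv, hCv⟩ := (hB.isTorusFun_sum_mul hv).exists_abs_le
  choose R hR using fun i => (hH i).exists_norm_le_of_le (a + Cv)
  obtain ⟨R₀, hR₀⟩ := Finite.bddAbove_range R
  refine le_of_forall_pos_le_add fun η hη => ?_
  set F : Fin m → Euc N × Euc N × Euc N → ℝ :=
    fun i q => H i q.1 q.2.1 + ∑ j, B q.1 i j * u j q.2.2
  have hF : ∀ i, Continuous (F i) := fun i =>
    ((hH i).1.comp (continuous_fst.prodMk (continuous_fst.comp continuous_snd))).add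
      (continuous_finsetSum _ fun j _ =>
        ((hB.1 i j).comp continuous_fst).mul ((hu.1 j).comp (continuous_snd.comp continuous_snd)))
  obtain ⟨δ, hδ, hunif⟩ := ((isCompact_closedBall (0 : Euc N) (N + 1)).prod
    ((isCompact_closedBall (0 : Euc N) R₀).prod
      (isCompact_closedBall (0 : Euc N) (N + 1)))).exists_forall_dist_lt hF hη
  set ρ := min δ 1
  have hρ : 0 < ρ := lt_min hδ one_pos
  set c := (2 * Cu + 1) / ρ ^ 2
  have hcρ : c * ρ ^ 2 = 2 * Cu + 1 := div_mul_cancel₀ _ (by positivity)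
  obtain ⟨i, x, y, hx, hmax⟩ := exists_isMax_penalizedDiff hm hv hu
    (c := c) (div_pos (by linarith) (by positivity)) hCu
  have hxy : ‖x - y‖ < ρ := norm_sub_lt_of_isMax_penalizedDiff hCu hρ (by linarith) (hmax i x x)
  set p := (2 * c) • (x - y)
  have hvx := hsub.le_of_forall_penalizedDiff_le (fun z => hmax i z y)
  have huy := hsup.le_of_forall_penalizedDiff_le (fun z => hmax i x z)
  have hcoup := (hB.2.2 x).1.sum_mul_le_sum_mul (hB.2.2 x).2.1
    (s := fun j => v j x) (t := fun j => u j y) (i := i) fun j => by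
      have := hmax j x y; simp only [penalizedDiff] at this; linarith
  have hp : ‖p‖ ≤ R₀ := (hR i x p (by linarith [abs_le.1 (hCv i x)])).trans (hR₀ ⟨i, rfl⟩)
  have hy : ‖y‖ ≤ N + 1 := by
    linarith [norm_le_norm_add_norm_sub' y x, norm_sub_rev x y, min_le_right δ 1]
  have hclose := hunif i (y, p, y) ⟨by simpa using hy, by simpa using hp, by simpa using hy⟩
    (x, p, y) ⟨by simpa using hx.trans (by linarith), by simpa using hp, by simpa using hy⟩
    (by simpa [Prod.dist_eq, dist_eq_norm, norm_sub_rev y x] using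
      hxy.trans_le (min_le_left _ _))
  linarith [(abs_lt.1 (Real.dist_eq _ _ ▸ hclose)).2]

/-- a subsolution with value `a` and a supersolution with value `b`
can coexist only if `b ≤ a`. -/
theorem stmt7 {N m : ℕ} (hN : 0 < N) (hm : 0 < m)
    (H : Fin m → Euc N → Euc N → ℝ) (hH : ∀ i, IsConvexHamiltonian (H i))
    (B : Euc N → Fin m → Fin m → ℝ) (hB : IsCouplingField B) (a b : ℝ)
    (v u : Fin m → Euc N → ℝ) (hv : IsTorusFun v) (hu : IsTorusFun u)
    (hsub : IsSubSol H B (fun _ => a) v) (hsup : IsSuperSol H B (fun _ => b) u) :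
    b ≤ a :=
  stmt7_general hm H hH B hB a b v u hv hu hsub hsup
end
end

section
/- Assume the critical value is 0. The Mañé matrix Φ verifies: (i) Φ_{i,j}(y,x) is finite for all i,j,x,y and Lipschitz continuous (in all variables); (ii) for every (y,j) ∈ T^N×{1,…,m}, the function Φ_{·,j}(y,·) belongs to H(0); (iii) for every (y,j) and every v ∈ H(0), v(x) − v_j(y)𝟙 ≤ Φ_{·,j}(y,x) componentwise for all x ∈ T^N, i.e. Φ_{·,j}(y,·) is the maximal critical subsolution whose j-th component vanishes at y; (iv) the triangle inequality Φ_{i,k}(x,z) ≤ Φ_{j,k}(x,y) + Φ_{i,j}(y,z) holds for all i,j,k ∈ {1,…,m} and x,y,z ∈ T^N. -/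
open Filter MeasureTheory

noncomputable section

/-!
Critical subsolutions are equi-Lipschitz with equibounded oscillation. At any point where a
`C¹` function touches `v_i` from above, `H_i ≥ -C` bounds the coupling term `(B v)_i` above;
such points are dense, so the bound holds everywhere. Irreducibility of the degenerate coupling
matrix turns the upper bound on `B v` into a bound on the spread `v_i - v_j`, which in turn bounds
`(B v)_i` below, so coercivity bounds the gradients of all test functions and `v` is Lipschitz.
Periodicity then bounds `v_i(x) - v_j(y)`, so `Φ` is a finite supremum of uniformly Lipschitz
functions. The supremum of the shifted subsolutions `v - v_j(y) 𝟙` is again a subsolution, since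
continuity of `H` and `B` and the sign of the off-diagonal coupling pass the subsolution
inequality to the limit at maximisers of `u - φ - ‖· - x₀‖²`; maximality and the triangle
inequality are immediate from the definition as a supremum.
-/

open Metric Set Topology NNReal

variable {N m : ℕ}

lemma exists_norm_sub_intVec_le (x : Euc N) : ∃ k : Fin N → ℤ, ‖x - intVec k‖ ≤ √N := by
  refine ⟨fun i => ⌊x i⌋, ?_⟩
  rw [EuclideanSpace.norm_eq]
  refine Real.sqrt_le_sqrt ((Finset.sum_le_card_nsmul _ _ 1 fun i _ => ?_).trans (by simp))
  have hfrac : (x - intVec fun i => ⌊x i⌋) i = Int.fract (x i) := by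
    simp [intVec, Int.self_sub_floor]
  rw [hfrac, Real.norm_eq_abs, sq_abs]
  nlinarith [Int.fract_nonneg (x i), Int.fract_lt_one (x i)]

namespace ZPeriodic

lemma exists_mem_closedBall_eq {α : Type*} {f : Euc N → α} (hf : ZPeriodic f) (x : Euc N) :
    ∃ x' ∈ closedBall (0 : Euc N) √N, f x' = f x := by
  obtain ⟨k, hk⟩ := exists_norm_sub_intVec_le x
  exact ⟨x - intVec k, by simpa using hk, by simpa using (hf (x - intVec k) k).symm⟩

lemma isCompact_range_s9 {α : Type*} [TopologicalSpace α] {f : Euc N → α} (hf : ZPeriodic f)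
    (hc : Continuous f) : IsCompact (range f) := by
  convert (isCompact_closedBall (0 : Euc N) √N).image hc
  refine (image_subset_range _ _).antisymm' ?_
  rintro _ ⟨x, rfl⟩
  obtain ⟨x', hx', hfx⟩ := hf.exists_mem_closedBall_eq x
  exact ⟨x', hx', hfx⟩

lemma exists_pos_le {f : Euc N → ℝ} (hf : ZPeriodic f) (hc : Continuous f)
    (hpos : ∀ x, 0 < f x) : ∃ ε > 0, ∀ x, ε ≤ f x := by
  obtain ⟨_, ⟨x₀, rfl⟩, hmin⟩ := (hf.isCompact_range_s9 hc).exists_isLeast (range_nonempty f)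
  exact ⟨f x₀, hpos x₀, fun x => hmin ⟨x, rfl⟩⟩

lemma exists_forall_abs_le {f : Euc N → ℝ} (hf : ZPeriodic f) (hc : Continuous f) :
    ∃ M, ∀ x, |f x| ≤ M := by
  obtain ⟨M, hM⟩ := isBounded_iff_forall_norm_le.1 (hf.isCompact_range_s9 hc).isBounded
  exact ⟨M, fun x => hM _ ⟨x, rfl⟩⟩

end ZPeriodic

namespace IsConvexHamiltonian

variable {H : Euc N → Euc N → ℝ}

lemma eventually_lt_of_le_norm (hH : IsConvexHamiltonian H) (C : ℝ) :
    ∀ᶠ R in atTop, ∀ x p, R ≤ ‖p‖ → C < H x p := by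
  obtain ⟨-, -, -, α, _, hα, -, hαH⟩ := hH
  obtain ⟨R₀, hR₀⟩ := eventually_atTop.1 (hα.eventually_gt_atTop C)
  filter_upwards [eventually_ge_atTop R₀] with R hR x p hp
  exact (hR₀ _ (hR.trans hp)).trans_le (hαH x p).1

lemma eventually_neg_le (hH : IsConvexHamiltonian H) : ∀ᶠ C in atTop, ∀ x p, -C ≤ H x p := by
  obtain ⟨R, hR⟩ := (hH.eventually_lt_of_le_norm 0).exists
  have hper : ZPeriodic H := fun x k => funext (hH.2.2.1 x k)
  obtain ⟨b, hb⟩ :=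
    (((isCompact_closedBall (0 : Euc N) √N).prod (isCompact_closedBall (0 : Euc N) R)).image
      hH.1).bddBelow
  filter_upwards [eventually_ge_atTop (-b), eventually_ge_atTop 0] with C hCb hC0 x p
  rcases le_or_gt R ‖p‖ with hp | hp
  · linarith [hR x p hp]
  · obtain ⟨x', hx', hHx⟩ := hper.exists_mem_closedBall_eq x
    have hbx : b ≤ H x' p := hb ⟨(x', p), ⟨hx', by simpa using hp.le⟩, rfl⟩
    linarith [congrFun hHx p]

end IsConvexHamiltonian

namespace IsCouplingMat

variable {b : Fin m → Fin m → ℝ}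

lemma diag_nonneg (hb : IsCouplingMat b) (hdeg : IsDegenerateMat b) (i : Fin m) : 0 ≤ b i i := by
  have hsum := hdeg i
  rw [← Finset.add_sum_erase _ _ (Finset.mem_univ i)] at hsum
  have : ∑ j ∈ Finset.univ.erase i, b i j ≤ 0 :=
    Finset.sum_nonpos fun j hj => hb.1 i j (Finset.ne_of_mem_erase hj)
  linarith

lemma sum_sum_compl_neg_pos (hb : IsCouplingMat b) (hirr : IsIrreducibleMat b)
    {I : Finset (Fin m)} (hI : I.Nonempty) (hIu : I ≠ Finset.univ) :
    0 < ∑ i ∈ I, ∑ j ∈ Iᶜ, -b i j := by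
  have hnonneg : ∀ i ∈ I, ∀ j ∈ Iᶜ, 0 ≤ -b i j := fun i hi j hj =>
    neg_nonneg.2 (hb.1 i j fun h => Finset.mem_compl.1 hj (h ▸ hi))
  obtain ⟨i₀, hi₀, j₀, hj₀, hb₀⟩ := hirr I hI hIu
  have hpos : 0 < -b i₀ j₀ :=
    (hnonneg i₀ hi₀ j₀ (Finset.mem_compl.2 hj₀)).lt_of_ne (neg_ne_zero.2 hb₀).symm
  exact Finset.sum_pos' (fun i hi => Finset.sum_nonneg (hnonneg i hi))
    ⟨i₀, hi₀, Finset.sum_pos' (hnonneg i₀ hi₀) ⟨j₀, Finset.mem_compl.2 hj₀, hpos⟩⟩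

lemma neg_mul_le_sum_mul (hb : IsCouplingMat b) (hdeg : IsDegenerateMat b) {s : Fin m → ℝ}
    {D : ℝ} {i : Fin m} (hD : ∀ j, s j - s i ≤ D) : -(b i i * D) ≤ ∑ j, b i j * s j := by
  have hshift : ∑ j, b i j * s j = ∑ j, b i j * (s j - s i - D) := by
    simp only [mul_sub, Finset.sum_sub_distrib, ← Finset.sum_mul, hdeg i, zero_mul, sub_zero]
  rw [hshift, ← Finset.add_sum_erase _ _ (Finset.mem_univ i), sub_self, zero_sub, mul_neg]
  exact le_add_of_nonneg_right (Finset.sum_nonneg fun j hj =>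
    mul_nonneg_of_nonpos_of_nonpos (hb.1 i j (Finset.ne_of_mem_erase hj)) (by linarith [hD j]))

lemma add_sum_erase_le_sum_mul (hb : IsCouplingMat b) {u w : Fin m → ℝ} (h : ∀ k, u k ≤ w k)
    (l : Fin m) : b l l * u l + ∑ k ∈ Finset.univ.erase l, b l k * w k ≤ ∑ k, b l k * u k := by
  rw [← Finset.add_sum_erase _ _ (Finset.mem_univ l)]
  exact add_le_add_right (Finset.sum_le_sum fun k hk =>
    mul_le_mul_of_nonpos_left (h k) (hb.1 l k (Finset.ne_of_mem_erase hk))) _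

end IsCouplingMat

/-- `spreadBound m C Cb ε t` bounds `max s - s k` on the `t + 1` largest entries of any `s`
with `b s ≤ C`, uniformly over the matrices `b` of `IsCouplingMat.sub_le_spreadBound`. -/
def spreadBound (m : ℕ) (C Cb ε : ℝ) : ℕ → ℝ
  | 0 => 0
  | t + 1 => spreadBound m C Cb ε t + m * (C + Cb * spreadBound m C Cb ε t) / ε

section SpreadBound

variable {C Cb ε : ℝ}

lemma spreadBound_nonneg (hC : 0 ≤ C) (hCb : 0 ≤ Cb) (hε : 0 < ε) :
    ∀ t, 0 ≤ spreadBound m C Cb ε t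
  | 0 => le_rfl
  | t + 1 => by have := spreadBound_nonneg hC hCb hε t; rw [spreadBound]; positivity

lemma spreadBound_le_succ (hC : 0 ≤ C) (hCb : 0 ≤ Cb) (hε : 0 < ε) (t : ℕ) :
    spreadBound m C Cb ε t ≤ spreadBound m C Cb ε (t + 1) := by
  have := spreadBound_nonneg (m := m) hC hCb hε t
  rw [spreadBound]
  exact le_add_of_nonneg_right (by positivity)

end SpreadBound

namespace IsCouplingMat

variable {b : Fin m → Fin m → ℝ} {s : Fin m → ℝ} {C Cb ε E : ℝ} {I : Finset (Fin m)}
  {i₀ j₀ : Fin m}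

/-- With `d k = s i₀ - s k ≥ 0` measured from the maximum of `s`, the `i`-th row of `b s ≤ C`
reads `-C ≤ ∑ⱼ b i j * d j`; off-diagonal terms inside `I` only help, and outside `I` each
`d j` is at least `d j₀`. -/
lemma neg_le_of_sum_mul_le (hb : IsCouplingMat b) (hdeg : IsDegenerateMat b)
    (hdiag : ∀ i, b i i ≤ Cb) (hs : ∀ i, ∑ j, b i j * s j ≤ C) (hi₀ : ∀ k, s k ≤ s i₀)
    (hI : ∀ i ∈ I, s i₀ - s i ≤ E) (hj₀ : ∀ k ∉ I, s k ≤ s j₀) {i : Fin m} (hi : i ∈ I) :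
    -C ≤ Cb * E + (∑ j ∈ Iᶜ, b i j) * (s i₀ - s j₀) := by
  have hrow : ∑ j, b i j * s j = -∑ j, b i j * (s i₀ - s j) := by
    simp only [mul_sub, Finset.sum_sub_distrib, ← Finset.sum_mul, hdeg i, zero_mul, zero_sub,
      neg_neg]
  have hin : ∑ j ∈ I, b i j * (s i₀ - s j) ≤ Cb * E := by
    calc ∑ j ∈ I, b i j * (s i₀ - s j) ≤ ∑ j ∈ I, if i = j then Cb * E else 0 := by
          refine Finset.sum_le_sum fun j hj => ?_
          split_ifs with hij
          · subst hij
            exact mul_le_mul (hdiag i) (hI i hi) (by linarith [hi₀ i])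
              ((hb.diag_nonneg hdeg i).trans (hdiag i))
          · exact mul_nonpos_of_nonpos_of_nonneg (hb.1 i j (Ne.symm hij)) (by linarith [hi₀ j])
      _ = Cb * E := by rw [Finset.sum_ite_eq, if_pos hi]
  have hout : ∑ j ∈ Iᶜ, b i j * (s i₀ - s j) ≤ (∑ j ∈ Iᶜ, b i j) * (s i₀ - s j₀) := by
    rw [Finset.sum_mul]
    refine Finset.sum_le_sum fun j hj => mul_le_mul_of_nonpos_left ?_ ?_
    · linarith [hj₀ j (Finset.mem_compl.1 hj)]
    · exact hb.1 i j fun h => Finset.mem_compl.1 hj (h ▸ hi)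
  have := hs i
  rw [hrow, ← Finset.sum_add_sum_compl I] at this
  linarith

lemma sub_le_of_sum_mul_le (hb : IsCouplingMat b) (hdeg : IsDegenerateMat b)
    (hdiag : ∀ i, b i i ≤ Cb) (hs : ∀ i, ∑ j, b i j * s j ≤ C) (hC : 0 ≤ C) (hCb : 0 ≤ Cb)
    (hε : 0 < ε) (hεI : ε ≤ ∑ i ∈ I, ∑ j ∈ Iᶜ, -b i j) (hi₀ : ∀ k, s k ≤ s i₀)
    (hI : ∀ i ∈ I, s i₀ - s i ≤ E) (hj₀ : ∀ k ∉ I, s k ≤ s j₀) :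
    s i₀ - s j₀ ≤ m * (C + Cb * E) / ε := by
  obtain ⟨i, hi⟩ : I.Nonempty :=
    Finset.nonempty_iff_ne_empty.2 fun h => by simp [h] at hεI; linarith
  have hE : 0 ≤ E := (sub_nonneg.2 (hi₀ i)).trans (hI i hi)
  have hsum := Finset.sum_le_sum fun i hi =>
    hb.neg_le_of_sum_mul_le hdeg hdiag hs hi₀ hI hj₀ (i := i) hi
  simp only [Finset.sum_const, nsmul_eq_mul, Finset.sum_add_distrib, ← Finset.sum_mul] at hsum
  have hcard : (I.card : ℝ) ≤ m := by exact_mod_cast (Finset.card_le_univ I).trans_eq (by simp)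
  have hneg : ∑ i ∈ I, ∑ j ∈ Iᶜ, b i j ≤ -ε := by simpa using neg_le_neg hεI
  rw [le_div_iff₀ hε]
  nlinarith [sub_nonneg.2 (hi₀ j₀), mul_nonneg hCb hE]

/-- Starting from the index of the maximum of `s`, the set of indices within `spreadBound t`
of the maximum gains a new element at each step, until it is everything. -/
theorem sub_le_spreadBound (hb : IsCouplingMat b) (hdeg : IsDegenerateMat b)
    (hdiag : ∀ i, b i i ≤ Cb) (hs : ∀ i, ∑ j, b i j * s j ≤ C) (hC : 0 ≤ C) (hCb : 0 ≤ Cb)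
    (hε : 0 < ε) (hεI : ∀ I : Finset (Fin m), I.Nonempty → I ≠ Finset.univ →
      ε ≤ ∑ i ∈ I, ∑ j ∈ Iᶜ, -b i j) (i j : Fin m) :
    s i - s j ≤ spreadBound m C Cb ε m := by
  have : Nonempty (Fin m) := ⟨i⟩
  obtain ⟨i₀, hi₀⟩ := Finite.exists_max s
  let J (t : ℕ) := Finset.univ.filter fun k => s i₀ - s k ≤ spreadBound m C Cb ε t
  have hJmono (t : ℕ) : J t ⊆ J (t + 1) := fun k hk => by
    simp only [J, Finset.mem_filter] at hk ⊢
    exact ⟨hk.1, hk.2.trans (spreadBound_le_succ hC hCb hε t)⟩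
  have hi₀J (t : ℕ) : i₀ ∈ J t := by
    simpa [J] using spreadBound_nonneg hC hCb hε t
  have hcard (t : ℕ) : min (t + 1) m ≤ (J t).card := by
    induction t with
    | zero => exact (min_le_left _ _).trans (Finset.card_pos.2 ⟨i₀, hi₀J 0⟩)
    | succ t ih =>
      by_cases hJt : J t = Finset.univ
      · rw [Finset.eq_univ_of_forall fun k => hJmono t (hJt ▸ Finset.mem_univ k)]
        simp
      obtain ⟨j₀, hj₀J, hj₀⟩ := Finset.exists_max_image (J t)ᶜ s
        ((Finset.compl_ne_univ_iff_nonempty _).1 (by simpa using hJt))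
      have hstep := sub_le_of_sum_mul_le hb hdeg hdiag hs hC hCb hε
        (hεI (J t) ⟨i₀, hi₀J t⟩ hJt) hi₀ (fun i hi => (Finset.mem_filter.1 hi).2)
        (fun k hk => hj₀ k (Finset.mem_compl.2 hk))
      have hj₀J' : j₀ ∈ J (t + 1) := by
        refine Finset.mem_filter.2 ⟨Finset.mem_univ _, ?_⟩
        rw [spreadBound]
        linarith [spreadBound_nonneg (m := m) hC hCb hε t]
      have := Finset.card_le_card (Finset.insert_subset hj₀J' (hJmono t))
      rw [Finset.card_insert_of_notMem (Finset.mem_compl.1 hj₀J)] at this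
      omega
  have hJ : J m = Finset.univ := Finset.eq_univ_of_card _ <|
    ((hcard m).trans' (by simp)).antisymm' ((Finset.card_le_univ _).trans_eq (by simp))
  have hj : j ∈ J m := hJ ▸ Finset.mem_univ j
  linarith [hi₀ i, (Finset.mem_filter.1 hj).2]

end IsCouplingMat

namespace IsCouplingField

variable {B : Euc N → Fin m → Fin m → ℝ}

lemma apply_add_intVec (hB : IsCouplingField B) (x : Euc N) (k : Fin N → ℤ) :
    B (x + intVec k) = B x :=
  funext fun i => funext fun j => hB.2.1 i j x k

lemma eventually_diag_le (hB : IsCouplingField B) : ∀ᶠ C in atTop, ∀ i x, B x i i ≤ C := by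
  refine eventually_all.2 fun i => ?_
  obtain ⟨M, hM⟩ := (hB.2.1 i i).exists_forall_abs_le (hB.1 i i)
  filter_upwards [eventually_ge_atTop M] with C hC x
  exact (le_abs_self _).trans ((hM x).trans hC)

lemma exists_pos_le_sum_sum_compl_neg (hB : IsCouplingField B) :
    ∃ ε > 0, ∀ I : Finset (Fin m), I.Nonempty → I ≠ Finset.univ →
      ∀ x, ε ≤ ∑ i ∈ I, ∑ j ∈ Iᶜ, -B x i j := by
  have h : ∀ I : Finset (Fin m), ∀ᶠ ε in 𝓝[>] (0 : ℝ), I.Nonempty → I ≠ Finset.univ →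
      ∀ x, ε ≤ ∑ i ∈ I, ∑ j ∈ Iᶜ, -B x i j := by
    intro I
    by_cases hI : I.Nonempty ∧ I ≠ Finset.univ
    · have hper : ZPeriodic fun x => ∑ i ∈ I, ∑ j ∈ Iᶜ, -B x i j := fun x k => by
        simp only [hB.apply_add_intVec]
      have hcont : Continuous fun x => ∑ i ∈ I, ∑ j ∈ Iᶜ, -B x i j :=
        continuous_finsetSum _ fun i _ => continuous_finsetSum _ fun j _ => (hB.1 i j).neg
      obtain ⟨ε₀, hε₀, hle⟩ := hper.exists_pos_le hcont fun x =>
        (hB.2.2 x).1.sum_sum_compl_neg_pos (hB.2.2 x).2.2 hI.1 hI.2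
      filter_upwards [nhdsWithin_le_nhds (eventually_lt_nhds hε₀)] with ε hε _ _ x
      exact hε.le.trans (hle x)
    · exact Eventually.of_forall fun _ h₁ h₂ => absurd ⟨h₁, h₂⟩ hI
  obtain ⟨ε, hε, hpos⟩ := ((eventually_all.2 h).and self_mem_nhdsWithin).exists
  exact ⟨ε, hpos, hε⟩

end IsCouplingField

section TestFunctions

variable {E : Type*} [NormedAddCommGroup E] [InnerProductSpace ℝ E]

lemma contDiff_mul_sqrt_norm_sub_sq_add_sq (K : ℝ) {η : ℝ} (hη : η ≠ 0) (y : E) :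
    ContDiff ℝ 1 fun x => K * √(‖x - y‖ ^ 2 + η ^ 2) :=
  contDiff_const.mul <| (((contDiff_id.sub contDiff_const).norm_sq ℝ).add contDiff_const).sqrt
    fun x => by positivity

variable [CompleteSpace E]

lemma continuous_gradient {φ : E → ℝ} (hφ : ContDiff ℝ 1 φ) : Continuous (gradient φ) :=
  (InnerProductSpace.toDual ℝ E).symm.continuous.comp (hφ.continuous_fderiv one_ne_zero)

lemma gradient_add_norm_sub_sq_self {φ : E → ℝ} {x₀ : E} (hφ : DifferentiableAt ℝ φ x₀) :
    gradient (fun x => φ x + ‖x - x₀‖ ^ 2) x₀ = gradient φ x₀ := by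
  have h : HasFDerivAt (fun x => ‖x - x₀‖ ^ 2) (0 : StrongDual ℝ E) x₀ := by
    simpa using ((hasFDerivAt_id x₀).sub_const x₀).norm_sq
  rw [gradient, gradient, (hφ.hasFDerivAt.fun_add h).fderiv, add_zero]

lemma hasGradientAt_mul_sqrt_norm_sub_sq_add_sq (K : ℝ) {η : ℝ} (hη : η ≠ 0) (y z : E) :
    HasGradientAt (fun x => K * √(‖x - y‖ ^ 2 + η ^ 2))
      ((K / √(‖z - y‖ ^ 2 + η ^ 2)) • (z - y)) z := by
  have hS : 0 < √(‖z - y‖ ^ 2 + η ^ 2) := Real.sqrt_pos.2 (by positivity)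
  have h := ((((hasFDerivAt_id z).sub_const y).norm_sq.add_const (η ^ 2)).sqrt
    (by positivity)).const_mul K
  rw [hasGradientAt_iff_hasFDerivAt]
  refine h.congr_fderiv ?_
  ext w
  simp [InnerProductSpace.toDual_apply_apply]
  field_simp

lemma norm_sub_le_of_norm_gradient_le {R η : ℝ} (hR : 0 ≤ R) (hη : 0 < η) {y z : E}
    (h : ‖gradient (fun x => (R + 1) * √(‖x - y‖ ^ 2 + η ^ 2)) z‖ ≤ R) : ‖z - y‖ ≤ R * η := by
  have hS : 0 < √(‖z - y‖ ^ 2 + η ^ 2) := Real.sqrt_pos.2 (by positivity)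
  rw [(hasGradientAt_mul_sqrt_norm_sub_sq_add_sq _ hη.ne' y z).gradient, norm_smul,
    Real.norm_of_nonneg (by positivity), div_mul_eq_mul_div, div_le_iff₀ hS] at h
  have hsq := mul_self_le_mul_self (by positivity) h
  rw [mul_mul_mul_comm _ _ R, Real.mul_self_sqrt (by positivity)] at hsq
  by_contra! hlt
  nlinarith [mul_self_lt_mul_self (by positivity) hlt, mul_nonneg hR (sq_nonneg ‖z - y‖)]

end TestFunctions

section TouchingFromAbove

variable {E : Type*} [NormedAddCommGroup E] [InnerProductSpace ℝ E] [ProperSpace E]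
  {u : E → ℝ}

/-- Maximise `u - λ ‖· - y‖²` over a small closed ball around `y`, with `λ` so large that the
maximiser cannot lie on the boundary sphere. -/
lemma dense_setOf_isLocalMax_sub (hu : Continuous u) :
    Dense {x | ∃ φ : E → ℝ, ContDiff ℝ 1 φ ∧ IsLocalMax (fun y => u y - φ y) x} := by
  refine Metric.dense_iff.2 fun y r hr => ?_
  have hball : (closedBall y (r / 2)).Nonempty := nonempty_closedBall.2 (by positivity)
  obtain ⟨z₀, -, hz₀⟩ := (isCompact_closedBall y (r / 2)).exists_isMaxOn hball hu.continuousOn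
  have hyz₀ : u y ≤ u z₀ := hz₀ (mem_closedBall_self (by positivity))
  set lam := (u z₀ - u y + 1) / (r / 2) ^ 2
  have hlam : lam * (r / 2) ^ 2 = u z₀ - u y + 1 := div_mul_cancel₀ _ (by positivity)
  have hφ : ContDiff ℝ 1 fun z => lam * ‖z - y‖ ^ 2 :=
    contDiff_const.mul ((contDiff_id.sub contDiff_const).norm_sq ℝ)
  obtain ⟨x, hx, hmax⟩ := (isCompact_closedBall y (r / 2)).exists_isMaxOn hball
    (hu.sub hφ.continuous).continuousOn
  have hxy : x ∈ ball y (r / 2) := by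
    have hyx : u y ≤ u x - lam * ‖x - y‖ ^ 2 := by
      simpa using hmax (mem_closedBall_self (by positivity))
    have hxz₀ : u x ≤ u z₀ := hz₀ hx
    rw [mem_ball_iff_norm]
    refine lt_of_pow_lt_pow_left₀ 2 (by positivity) (lt_of_not_ge fun hle => ?_)
    have := mul_le_mul_of_nonneg_left hle (div_nonneg (by linarith) (by positivity) : 0 ≤ lam)
    linarith
  exact ⟨x, ball_subset_ball (half_le_self hr.le) hxy, _, hφ,
    hmax.isLocalMax (closedBall_mem_nhds_of_mem hxy)⟩

lemma le_of_forall_isLocalMax_sub (hu : Continuous u) {g : E → ℝ} (hg : Continuous g) {C : ℝ}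
    (h : ∀ x φ, ContDiff ℝ 1 φ → IsLocalMax (fun y => u y - φ y) x → g x ≤ C) (x : E) :
    g x ≤ C :=
  (dense_setOf_isLocalMax_sub hu).induction (fun x ⟨φ, hφ, hmax⟩ => h x φ hφ hmax)
    (isClosed_le hg continuous_const) x

/-- Touch `u` from above by the smoothed cone `(R + 1) √(‖· - y‖² + η²)`: the gradient bound
keeps the touching point within `R η` of `y`. -/
lemma exists_norm_sub_le_forall_le_of_forall_isLocalMax_sub (hu : Continuous u) {M : ℝ}
    (hM : ∀ x, |u x| ≤ M) {R : ℝ} (hR : 0 ≤ R)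
    (hgrad : ∀ x φ, ContDiff ℝ 1 φ → IsLocalMax (fun y => u y - φ y) x → ‖gradient φ x‖ ≤ R)
    (y : E) {η : ℝ} (hη : 0 < η) :
    ∃ z, ‖z - y‖ ≤ R * η ∧ ∀ x, u x ≤ (R + 1) * √(‖x - y‖ ^ 2 + η ^ 2) + u z := by
  set φ : E → ℝ := fun x => (R + 1) * √(‖x - y‖ ^ 2 + η ^ 2)
  have hφ : ContDiff ℝ 1 φ := contDiff_mul_sqrt_norm_sub_sq_add_sq _ hη.ne' y
  have hφ_ge (x : E) : (R + 1) * ‖x - y‖ ≤ φ x :=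
    mul_le_mul_of_nonneg_left (Real.le_sqrt_of_sq_le (by nlinarith)) (by positivity)
  have hφy : φ y = (R + 1) * η := by simp [φ, Real.sqrt_sq hη.le]
  have hM0 : 0 ≤ M := (abs_nonneg _).trans (hM y)
  set ρ := (2 * M + 1) / (R + 1) + η
  have hρ : 0 ≤ ρ := by positivity
  have hfar (x : E) (hx : ρ ≤ ‖x - y‖) : u x - φ x < u y - φ y := by
    have h1 : (R + 1) * ρ ≤ φ x := (mul_le_mul_of_nonneg_left hx (by positivity)).trans (hφ_ge x)
    have h2 : (R + 1) * ρ = 2 * M + 1 + (R + 1) * η := by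
      simp only [ρ]; field_simp
    linarith [abs_le.1 (hM x), abs_le.1 (hM y)]
  obtain ⟨z, -, hz⟩ := (isCompact_closedBall y ρ).exists_isMaxOn (nonempty_closedBall.2 hρ)
    (hu.sub hφ.continuous).continuousOn
  have hzmax (x : E) : u x - φ x ≤ u z - φ z := by
    by_cases hx : x ∈ closedBall y ρ
    · exact hz hx
    · rw [mem_closedBall_iff_norm, not_le] at hx
      exact (hfar x hx.le).le.trans (hz (mem_closedBall_self hρ))
  have hzy : z ∈ ball y ρ := by
    rw [mem_ball_iff_norm]
    by_contra! h
    exact (hfar z h).not_ge (hzmax y)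
  refine ⟨z, norm_sub_le_of_norm_gradient_le hR hη
    (hgrad z φ hφ (hz.isLocalMax (closedBall_mem_nhds_of_mem hzy))), fun x => ?_⟩
  have hφz : 0 ≤ φ z := by positivity
  linarith [hzmax x]

theorem lipschitzWith_of_forall_isLocalMax_sub (hu : Continuous u) {M : ℝ}
    (hM : ∀ x, |u x| ≤ M) {R : ℝ≥0}
    (hgrad : ∀ x φ, ContDiff ℝ 1 φ → IsLocalMax (fun y => u y - φ y) x → ‖gradient φ x‖ ≤ R) :
    LipschitzWith (R + 1) u := by
  refine LipschitzWith.of_le_add_mul _ fun x y => le_of_forall_pos_lt_add fun ε hε => ?_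
  obtain ⟨δ, hδ, hcont⟩ := Metric.continuousAt_iff.1 (hu.continuousAt (x := y)) (ε / 2)
    (half_pos hε)
  obtain ⟨η, hη, hRη⟩ : ∃ η > 0, (R + 1) * η = min δ ε / 2 :=
    ⟨min δ ε / (2 * (R + 1)), by positivity, by field_simp⟩
  obtain ⟨z, hzy, hz⟩ :=
    exists_norm_sub_le_forall_le_of_forall_isLocalMax_sub hu hM R.coe_nonneg hgrad y hη
  have hzy' : ‖z - y‖ < δ := by linarith [add_one_mul (R : ℝ) η, min_le_left δ ε]
  have huz := (abs_sub_lt_iff.1 (Real.dist_eq _ _ ▸ hcont (dist_eq_norm z y ▸ hzy'))).1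
  have hsqrt : √(‖x - y‖ ^ 2 + η ^ 2) ≤ dist x y + η :=
    Real.sqrt_le_iff.2 ⟨by positivity, by rw [dist_eq_norm]; nlinarith [norm_nonneg (x - y)]⟩
  push_cast
  calc u x ≤ (R + 1) * √(‖x - y‖ ^ 2 + η ^ 2) + u z := hz x
    _ ≤ (R + 1) * (dist x y + η) + u z := by gcongr
    _ < u y + (R + 1) * dist x y + ε := by nlinarith [min_le_right δ ε]

end TouchingFromAbove

lemma IsSubSol.sub_const {H : Fin m → Euc N → Euc N → ℝ} {B : Euc N → Fin m → Fin m → ℝ}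
    {a : Fin m → ℝ} {u : Fin m → Euc N → ℝ} (hdeg : ∀ x, IsDegenerateMat (B x))
    (hu : IsSubSol H B a u) (c : ℝ) : IsSubSol H B a fun i x => u i x - c := by
  intro i x φ hφ hmax
  have h := hu i x (fun y => φ y + c) (hφ.add contDiff_const) (by convert hmax using 2; ring)
  have hgrad : gradient (fun y => φ y + c) x = gradient φ x := by
    rw [gradient, gradient, fderiv_add_const]
  simpa [hgrad, mul_sub, Finset.sum_sub_distrib, ← Finset.sum_mul, hdeg x i] using h

section Envelope

variable {H : Fin m → Euc N → Euc N → ℝ} {B : Euc N → Fin m → Fin m → ℝ} {a : Fin m → ℝ}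
  {F : Set (Fin m → Euc N → ℝ)} {w : Fin m → Euc N → ℝ}

/-- Maximise `u l - φ - ‖· - x₀‖²` near `x₀` for a member `u` of `F` that almost attains
`w l x₀`; at the maximiser the subsolution inequality for `u` holds with the off-diagonal
`u k` raised to `w k`. -/
lemma exists_near_of_isLocalMax_sub_of_isLUB (hBc : ∀ x, IsCouplingMat (B x))
    (hF : ∀ u ∈ F, (∀ i, Continuous (u i)) ∧ IsSubSol H B a u)
    (hw : ∀ i x, IsLUB ((fun u => u i x) '' F) (w i x))
    {l : Fin m} {x₀ : Euc N} {φ : Euc N → ℝ} (hφ : ContDiff ℝ 1 φ) {r : ℝ} (hr : 0 < r)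
    (hball : ∀ z ∈ closedBall x₀ r, w l z - φ z ≤ w l x₀ - φ x₀) {ρ : ℝ} (hρ : 0 < ρ) :
    ∃ x t, ‖x - x₀‖ < ρ ∧ w l x₀ - ρ ^ 2 + (‖x - x₀‖ ^ 2 + (φ x - φ x₀)) ≤ t ∧ t ≤ w l x ∧
      H l x (gradient (fun z => φ z + ‖z - x₀‖ ^ 2) x) + B x l l * t +
        ∑ k ∈ Finset.univ.erase l, B x l k * w k x ≤ a l := by
  set r' := min ρ r
  have hr' : 0 < r' := lt_min hρ hr
  obtain ⟨_, ⟨u, hu, rfl⟩, hux₀, -⟩ := (hw l x₀).exists_between_sub_self (pow_pos hr' 2)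
  have hle (i : Fin m) (x : Euc N) : u i x ≤ w i x := (hw i x).1 ⟨u, hu, rfl⟩
  have hψ : ContDiff ℝ 1 fun z => φ z + ‖z - x₀‖ ^ 2 :=
    hφ.add ((contDiff_id.sub contDiff_const).norm_sq ℝ)
  obtain ⟨x, hx, hmax⟩ := (isCompact_closedBall x₀ r').exists_isMaxOn
    (nonempty_closedBall.2 hr'.le) (((hF u hu).1 l).sub hψ.continuous).continuousOn
  have hx₀x : u l x₀ - φ x₀ ≤ u l x - (φ x + ‖x - x₀‖ ^ 2) := by
    simpa using hmax (mem_closedBall_self hr'.le)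
  have hwx := hball x (closedBall_subset_closedBall (min_le_right ρ r) hx)
  have hxr' : ‖x - x₀‖ < r' := by
    refine lt_of_pow_lt_pow_left₀ 2 hr'.le ?_
    linarith [hle l x]
  refine ⟨x, u l x, hxr'.trans_le (min_le_left ρ r), ?_, hle l x, ?_⟩
  · nlinarith [min_le_left ρ r]
  · refine le_trans ?_ ((hF u hu).2 l x _ hψ
      (hmax.isLocalMax (closedBall_mem_nhds_of_mem (mem_ball_iff_norm.2 hxr'))))
    simpa [add_assoc] using
      (hBc x).add_sum_erase_le_sum_mul (u := fun k => u k x) (fun k => hle k x) l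

/-- The subsolution inequality passes to the limit along the maximisers of the previous lemma,
by continuity of `H`, `B` and `w`. -/
theorem isSubSol_of_isLUB (hH : ∀ i, Continuous fun q : Euc N × Euc N => H i q.1 q.2)
    (hB : ∀ i j, Continuous fun x => B x i j) (hBc : ∀ x, IsCouplingMat (B x))
    (hF : ∀ u ∈ F, (∀ i, Continuous (u i)) ∧ IsSubSol H B a u) (hwc : ∀ i, Continuous (w i))
    (hw : ∀ i x, IsLUB ((fun u => u i x) '' F) (w i x)) : IsSubSol H B a w := by
  intro l x₀ φ hφ hmax
  obtain ⟨r, hr, hball⟩ := Metric.nhds_basis_closedBall.eventually_iff.1 hmax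
  set ψ := fun z => φ z + ‖z - x₀‖ ^ 2
  have hψ : ContDiff ℝ 1 ψ := hφ.add ((contDiff_id.sub contDiff_const).norm_sq ℝ)
  set G : Euc N × ℝ → ℝ := fun q => H l q.1 (gradient ψ q.1) + B q.1 l l * q.2 +
    ∑ k ∈ Finset.univ.erase l, B q.1 l k * w k q.1
  have hG : Continuous G :=
    (((hH l).comp (continuous_fst.prodMk ((continuous_gradient hψ).comp continuous_fst))).add
      (((hB l l).comp continuous_fst).mul continuous_snd)).add
      (continuous_finsetSum _ fun k _ => ((hB l k).comp continuous_fst).mul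
        ((hwc k).comp continuous_fst))
  choose x t hx hlow hup hxt using fun n : ℕ =>
    exists_near_of_isLocalMax_sub_of_isLUB hBc hF hw hφ hr (fun z hz => hball hz)
      (Nat.one_div_pos_of_nat (n := n) (α := ℝ))
  have hρ : Tendsto (fun n : ℕ => 1 / ((n : ℝ) + 1)) atTop (𝓝 0) :=
    tendsto_one_div_add_atTop_nhds_zero_nat
  have hxlim : Tendsto x atTop (𝓝 x₀) := tendsto_iff_norm_sub_tendsto_zero.2
    (squeeze_zero (fun _ => norm_nonneg _) (fun n => (hx n).le) hρ)
  have htlim : Tendsto t atTop (𝓝 (w l x₀)) := by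
    refine tendsto_of_tendsto_of_tendsto_of_le_of_le ?_ (((hwc l).tendsto x₀).comp hxlim) hlow hup
    have hcont : Continuous fun z => ‖z - x₀‖ ^ 2 + (φ z - φ x₀) :=
      ((continuous_id.sub continuous_const).norm.pow 2).add (hφ.continuous.sub continuous_const)
    simpa using ((tendsto_const_nhds (x := w l x₀)).sub (hρ.pow 2)).add
      ((hcont.tendsto x₀).comp hxlim)
  have hlim : G (x₀, w l x₀) ≤ a l :=
    le_of_tendsto ((hG.tendsto _).comp (hxlim.prodMk_nhds htlim)) (Eventually.of_forall hxt)
  rw [← Finset.add_sum_erase _ _ (Finset.mem_univ l), ← add_assoc,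
    ← gradient_add_norm_sub_sq_self (hφ.differentiable one_ne_zero x₀)]
  exact hlim

end Envelope

theorem exists_lipschitzWith_and_sub_le_of_mem_crit {H : Fin m → Euc N → Euc N → ℝ}
    {B : Euc N → Fin m → Fin m → ℝ} (hH : ∀ i, IsConvexHamiltonian (H i))
    (hB : IsCouplingField B) :
    ∃ (K : ℝ≥0) (D : ℝ), ∀ v ∈ Crit H B,
      (∀ i, LipschitzWith K (v i)) ∧ ∀ x i j, v i x - v j x ≤ D := by
  obtain ⟨C, hC, hC0⟩ :=
    ((eventually_all.2 fun i => (hH i).eventually_neg_le).and (eventually_ge_atTop 0)).exists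
  obtain ⟨Cb, hCb, hCb0⟩ := (hB.eventually_diag_le.and (eventually_ge_atTop 0)).exists
  obtain ⟨ε, hε, hεI⟩ := hB.exists_pos_le_sum_sum_compl_neg
  set D := spreadBound m C Cb ε m
  have hD : 0 ≤ D := spreadBound_nonneg hC0 hCb0 hε m
  obtain ⟨R, hR, hR0⟩ := ((eventually_all.2 fun i => (hH i).eventually_lt_of_le_norm (Cb * D)).and
    (eventually_ge_atTop 0)).exists
  refine ⟨R.toNNReal + 1, D, fun v hv => ?_⟩
  have hcoupling_le (i : Fin m) (x : Euc N) : ∑ j, B x i j * v j x ≤ C :=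
    le_of_forall_isLocalMax_sub (g := fun x => ∑ j, B x i j * v j x) (hv.1.1 i)
      (continuous_finsetSum _ fun j _ => (hB.1 i j).mul (hv.1.1 j))
      (fun x φ hφ hmax => by linarith [hv.2 i x φ hφ hmax, hC i x (gradient φ x)]) x
  have hspread (x : Euc N) (i j : Fin m) : v i x - v j x ≤ D :=
    (hB.2.2 x).1.sub_le_spreadBound (hB.2.2 x).2.1 (fun i => hCb i x) (fun i => hcoupling_le i x)
      hC0 hCb0 hε (fun I hI hIu => hεI I hI hIu x) i j
  refine ⟨fun i => ?_, hspread⟩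
  obtain ⟨M, hM⟩ := (hv.1.2 i).exists_forall_abs_le (hv.1.1 i)
  refine lipschitzWith_of_forall_isLocalMax_sub (hv.1.1 i) hM fun x φ hφ hmax => ?_
  have hcoupling_ge : -(Cb * D) ≤ ∑ j, B x i j * v j x :=
    le_trans (neg_le_neg (mul_le_mul_of_nonneg_right (hCb i x) hD))
      ((hB.2.2 x).1.neg_mul_le_sum_mul (hB.2.2 x).2.1 fun j => hspread x j i)
  rw [Real.coe_toNNReal _ hR0]
  by_contra! hlt
  linarith [hR i x _ hlt.le, hv.2 i x φ hφ hmax]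

lemma LipschitzWith.csSup_image {α ι : Type*} [PseudoMetricSpace α] {s : Set ι} (hs : s.Nonempty)
    {f : ι → α → ℝ} {K : ℝ≥0} (hf : ∀ i ∈ s, LipschitzWith K (f i))
    (hbdd : ∀ x, BddAbove ((fun i => f i x) '' s)) :
    LipschitzWith K fun x => sSup ((fun i => f i x) '' s) :=
  LipschitzWith.of_le_add_mul K fun x y => csSup_le (hs.image _) <| forall_mem_image.2 fun i hi =>
    ((hf i hi).le_add_mul x y).trans (by gcongr; exact le_csSup (hbdd y) (mem_image_of_mem _ hi))

lemma sub_le_add_mul_sqrt_of_lipschitzWith {v : Fin m → Euc N → ℝ} (hper : ∀ j, ZPeriodic (v j))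
    {K : ℝ≥0} (hK : ∀ j, LipschitzWith K (v j)) {D : ℝ} (hD : ∀ x i j, v i x - v j x ≤ D)
    (i j : Fin m) (x y : Euc N) : v i x - v j y ≤ D + K * √N := by
  obtain ⟨k, hk⟩ := exists_norm_sub_intVec_le (x - y)
  have hlip := (hK j).le_add_mul x (y + intVec k)
  rw [dist_eq_norm, hper j y k, sub_add_eq_sub_sub] at hlip
  linarith [hD x i j, mul_le_mul_of_nonneg_left hk K.coe_nonneg]

section Mane

variable {H : Fin m → Euc N → Euc N → ℝ} {B : Euc N → Fin m → Fin m → ℝ}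

lemma le_mane
    (hbdd : ∀ i j y x, BddAbove ((fun v : Fin m → Euc N → ℝ => v i x - v j y) '' Crit H B))
    {v : Fin m → Euc N → ℝ} (hv : v ∈ Crit H B) (i j : Fin m) (y x : Euc N) :
    v i x - v j y ≤ Mane H B i j y x :=
  le_csSup (hbdd i j y x) ⟨v, hv, rfl⟩

lemma mane_le (hne : (Crit H B).Nonempty) {i j : Fin m} {y x : Euc N} {c : ℝ}
    (h : ∀ v ∈ Crit H B, v i x - v j y ≤ c) : Mane H B i j y x ≤ c :=
  csSup_le (hne.image _) (forall_mem_image.2 h)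

lemma mane_self (hne : (Crit H B).Nonempty)
    (hbdd : ∀ i j y x, BddAbove ((fun v : Fin m → Euc N → ℝ => v i x - v j y) '' Crit H B))
    (j : Fin m) (y : Euc N) : Mane H B j j y y = 0 := by
  obtain ⟨v, hv⟩ := hne
  exact le_antisymm (mane_le ⟨v, hv⟩ fun v _ => (sub_self _).le)
    ((sub_self _).symm.le.trans (le_mane hbdd hv j j y y))

lemma mane_le_mane_add_mane (hne : (Crit H B).Nonempty)
    (hbdd : ∀ i j y x, BddAbove ((fun v : Fin m → Euc N → ℝ => v i x - v j y) '' Crit H B))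
    (i j k : Fin m) (x y z : Euc N) : Mane H B i k x z ≤ Mane H B j k x y + Mane H B i j y z :=
  mane_le hne fun v hv => by linarith [le_mane hbdd hv j k x y, le_mane hbdd hv i j y z]

lemma lipschitzWith_mane (hne : (Crit H B).Nonempty)
    (hbdd : ∀ i j y x, BddAbove ((fun v : Fin m → Euc N → ℝ => v i x - v j y) '' Crit H B))
    {K : ℝ≥0} (hK : ∀ v ∈ Crit H B, ∀ i, LipschitzWith K (v i)) (i j : Fin m) :
    LipschitzWith (K + K) fun p : Euc N × Euc N => Mane H B i j p.1 p.2 := by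
  refine LipschitzWith.csSup_image hne (fun v hv => ?_) fun p => hbdd i j p.1 p.2
  simpa using ((hK v hv i).comp LipschitzWith.prod_snd).sub
    ((hK v hv j).comp LipschitzWith.prod_fst)

lemma zPeriodic_mane (i j : Fin m) (y : Euc N) : ZPeriodic fun x => Mane H B i j y x :=
  fun x k => congrArg sSup <| image_congr fun v hv => by rw [hv.1.2 i x k]

lemma mane_mem_crit (hH : ∀ i, Continuous fun q : Euc N × Euc N => H i q.1 q.2)
    (hB : IsCouplingField B) (hne : (Crit H B).Nonempty)
    (hbdd : ∀ i j y x, BddAbove ((fun v : Fin m → Euc N → ℝ => v i x - v j y) '' Crit H B))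
    {K : ℝ≥0} (hK : ∀ i j, LipschitzWith K fun p : Euc N × Euc N => Mane H B i j p.1 p.2)
    (j : Fin m) (y : Euc N) : (fun i x => Mane H B i j y x) ∈ Crit H B := by
  have hcont (i : Fin m) : Continuous fun x => Mane H B i j y x :=
    (hK i j).continuous.comp (continuous_const.prodMk continuous_id)
  refine ⟨⟨hcont, fun i => zPeriodic_mane i j y⟩, isSubSol_of_isLUB hH hB.1
    (fun x => (hB.2.2 x).1) (F := (fun v i x => v i x - v j y) '' Crit H B) ?_ hcont
    fun i x => ?_⟩
  · rintro _ ⟨v, hv, rfl⟩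
    exact ⟨fun i => (hv.1.1 i).sub continuous_const, hv.2.sub_const (fun x => (hB.2.2 x).2.1) _⟩
  · rw [image_image]
    exact isLUB_csSup (hne.image _) (hbdd i j y x)

end Mane

theorem stmt9_general {N m : ℕ}
    (H : Fin m → Euc N → Euc N → ℝ) (hH : ∀ i, IsConvexHamiltonian (H i))
    (B : Euc N → Fin m → Fin m → ℝ) (hB : IsCouplingField B)
    (hcrit : IsLeast {a : ℝ | HasSubSol H B a} 0) :
    (∀ (i j : Fin m) (y x : Euc N),
        ((fun v : Fin m → Euc N → ℝ => v i x - v j y) '' Crit H B).Nonempty ∧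
        BddAbove ((fun v : Fin m → Euc N → ℝ => v i x - v j y) '' Crit H B)) ∧
    (∃ K : NNReal, ∀ i j : Fin m,
        LipschitzWith K (fun p : Euc N × Euc N => Mane H B i j p.1 p.2)) ∧
    (∀ (j : Fin m) (y : Euc N), (fun i x => Mane H B i j y x) ∈ Crit H B) ∧
    (∀ (j : Fin m) (y : Euc N), Mane H B j j y y = 0 ∧
        ∀ v ∈ Crit H B, ∀ (i : Fin m) (x : Euc N), v i x - v j y ≤ Mane H B i j y x) ∧
    (∀ (i j k : Fin m) (x y z : Euc N),
        Mane H B i k x z ≤ Mane H B j k x y + Mane H B i j y z) := by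
  obtain ⟨K, D, hKD⟩ := exists_lipschitzWith_and_sub_le_of_mem_crit hH hB
  obtain ⟨v₀, hv₀⟩ := hcrit.1
  have hne : (Crit H B).Nonempty := ⟨v₀, hv₀⟩
  have hbdd (i j : Fin m) (y x : Euc N) :
      BddAbove ((fun v : Fin m → Euc N → ℝ => v i x - v j y) '' Crit H B) :=
    ⟨D + K * √N, forall_mem_image.2 fun v hv =>
      sub_le_add_mul_sqrt_of_lipschitzWith hv.1.2 (hKD v hv).1 (hKD v hv).2 i j x y⟩
  have hlip := lipschitzWith_mane hne hbdd fun v hv => (hKD v hv).1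
  exact ⟨fun i j y x => ⟨hne.image _, hbdd i j y x⟩, ⟨_, hlip⟩,
    mane_mem_crit (fun i => (hH i).1) hB hne hbdd hlip,
    fun j y => ⟨mane_self hne hbdd j y, fun v hv i x => le_mane hbdd hv i j y x⟩,
    mane_le_mane_add_mane hne hbdd⟩

/-- basic properties of the Mañé matrix. -/
theorem stmt9 {N m : ℕ} (hN : 0 < N) (hm : 0 < m)
    (H : Fin m → Euc N → Euc N → ℝ) (hH : ∀ i, IsConvexHamiltonian (H i))
    (B : Euc N → Fin m → Fin m → ℝ) (hB : IsCouplingField B)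
    (hcrit : IsLeast {a : ℝ | HasSubSol H B a} 0) :
    (∀ (i j : Fin m) (y x : Euc N),
        ((fun v : Fin m → Euc N → ℝ => v i x - v j y) '' Crit H B).Nonempty ∧
        BddAbove ((fun v : Fin m → Euc N → ℝ => v i x - v j y) '' Crit H B)) ∧
    (∃ K : NNReal, ∀ i j : Fin m,
        LipschitzWith K (fun p : Euc N × Euc N => Mane H B i j p.1 p.2)) ∧
    (∀ (j : Fin m) (y : Euc N), (fun i x => Mane H B i j y x) ∈ Crit H B) ∧
    (∀ (j : Fin m) (y : Euc N), Mane H B j j y y = 0 ∧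
        ∀ v ∈ Crit H B, ∀ (i : Fin m) (x : Euc N), v i x - v j y ≤ Mane H B i j y x) ∧
    (∀ (i j k : Fin m) (x y z : Euc N),
        Mane H B i k x z ≤ Mane H B j k x y + Mane H B i j y z) :=
  stmt9_general H hH B hB hcrit

end
end
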